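/- arXiv:1304.4426 — 2 statements merged into one kernel-verified Lean document; each statement's English description precedes it below -/
import Mathlib

section
/- The vector fields ∂_y, x∂_x + y∂_y, 2xy∂_x + y²∂_y on the half-plane {x>0} form a Lie algebra isomorphic to sl(2,ℝ), and each is a projective vector field for the metric g = x dx² − 2εx dy², i.e., their flows map solutions of x y'' = ε(y')³ − (1/2)y' to solutions. -/
noncomputable section

open scoped BigOperators

/-- Partial derivative of a scalar function on `ℝⁿ` in the `i`-th coordinate direction. -/
def pd {n : ℕ} (i : Fin n) (f : (Fin n → ℝ) → ℝ) (x : Fin n → ℝ) : ℝ :=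
  fderiv ℝ f x (Pi.single i 1)

/-- The `m`-th coordinate of a point of `ℝⁿ` (junk value `0` if `m ≥ n`). -/
def co {n : ℕ} (m : ℕ) (x : Fin n → ℝ) : ℝ :=
  if h : m < n then x ⟨m, h⟩ else 0

/-- Christoffel symbols `Γ^k_{ij} = ½ g^{kl}(∂_i g_{jl} + ∂_j g_{il} − ∂_l g_{ij})`
of a metric given as a matrix-valued function. -/
def christoffel {n : ℕ} (g : (Fin n → ℝ) → Matrix (Fin n) (Fin n) ℝ)
    (k i j : Fin n) (x : Fin n → ℝ) : ℝ :=
  (1/2) * ∑ l, (g x)⁻¹ k l *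
    (pd i (fun y => g y j l) x + pd j (fun y => g y i l) x - pd l (fun y => g y i j) x)

/-- Curvature tensor `R^i_{jkl}` of a torsion-free connection with Christoffel symbols `Γ`. -/
def curvature {n : ℕ} (Γ : Fin n → Fin n → Fin n → (Fin n → ℝ) → ℝ)
    (i j k l : Fin n) (x : Fin n → ℝ) : ℝ :=
  pd k (Γ i l j) x - pd l (Γ i k j) x +
    ∑ s, (Γ i k s x * Γ s l j x - Γ i l s x * Γ s k j x)

/-- Ricci tensor `Ric_{jl} = R^i_{jil}`. -/
def ricci {n : ℕ} (Γ : Fin n → Fin n → Fin n → (Fin n → ℝ) → ℝ)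
    (j l : Fin n) (x : Fin n → ℝ) : ℝ :=
  ∑ i, curvature Γ i j i l x

/-- Lie derivative `(L_v g)_{ij} = v^k ∂_k g_{ij} + g_{kj} ∂_i v^k + g_{ik} ∂_j v^k`. -/
def lieMetric {n : ℕ} (v : Fin n → (Fin n → ℝ) → ℝ)
    (g : (Fin n → ℝ) → Matrix (Fin n) (Fin n) ℝ) (i j : Fin n) (x : Fin n → ℝ) : ℝ :=
  ∑ k, (v k x * pd k (fun y => g y i j) x
        + g x k j * pd i (v k) x + g x i k * pd j (v k) x)

/-- Lie derivative `(L_v Γ)^k_{ij}` of a torsion-free connection along a vector field `v`. -/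
def lieConn {n : ℕ} (v : Fin n → (Fin n → ℝ) → ℝ)
    (Γ : Fin n → Fin n → Fin n → (Fin n → ℝ) → ℝ)
    (k i j : Fin n) (x : Fin n → ℝ) : ℝ :=
  pd i (fun y => pd j (v k) y) x +
    ∑ s, (v s x * pd s (Γ k i j) x + Γ k s j x * pd i (v s) x
          + Γ k i s x * pd j (v s) x - Γ s i j x * pd s (v k) x)

/-- A vector field with smooth components. -/
def SmoothVF {n : ℕ} (v : Fin n → (Fin n → ℝ) → ℝ) : Prop :=
  ∀ k, ContDiff ℝ (⊤ : ℕ∞) (v k)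

/-- `v` is a projective vector field of `g`: the Lie derivative of the Levi-Civita
connection along `v` is of the form `δ^k_i φ_j + δ^k_j φ_i` for some 1-form `φ`
(the standard characterization of projective fields). -/
def IsProjectiveField {n : ℕ} (g : (Fin n → ℝ) → Matrix (Fin n) (Fin n) ℝ)
    (v : Fin n → (Fin n → ℝ) → ℝ) : Prop :=
  ∃ φ : Fin n → (Fin n → ℝ) → ℝ, ∀ k i j x,
    lieConn v (christoffel g) k i j x =
      (if k = i then φ j x else 0) + (if k = j then φ i x else 0)

/-- The set of (smooth) projective vector fields of `g`: the projective algebra `𝔭(g)`. -/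
def ProjSet {n : ℕ} (g : (Fin n → ℝ) → Matrix (Fin n) (Fin n) ℝ) :
    Set (Fin n → (Fin n → ℝ) → ℝ) :=
  {v | SmoothVF v ∧ IsProjectiveField g v}

/-- The set of (smooth) Killing fields of `g`: the isometry algebra `I(g)`. -/
def KillSet {n : ℕ} (g : (Fin n → ℝ) → Matrix (Fin n) (Fin n) ℝ) :
    Set (Fin n → (Fin n → ℝ) → ℝ) :=
  {v | SmoothVF v ∧ ∀ i j x, lieMetric v g i j x = 0}

/-- The set of (smooth) homothety fields of `g` (`L_v g = λ·g`, `λ` constant):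
the homothety algebra `H(g)`. -/
def HomSet {n : ℕ} (g : (Fin n → ℝ) → Matrix (Fin n) (Fin n) ℝ) :
    Set (Fin n → (Fin n → ℝ) → ℝ) :=
  {v | SmoothVF v ∧ ∃ c : ℝ, ∀ i j x, lieMetric v g i j x = c * g x i j}

/-- The 2D metric `g = x dx² − 2εx dy²` on the half-plane `{x > 0}`. -/
def g2D (ε : ℝ) (x : Fin 2 → ℝ) : Matrix (Fin 2) (Fin 2) ℝ := fun i j =>
  if i = 0 ∧ j = 0 then x 0
  else if i = 1 ∧ j = 1 then -2 * ε * x 0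
  else 0

/-- The Lie bracket of vector fields on ℝⁿ. -/
def vfBracket {n : ℕ} (v w : Fin n → (Fin n → ℝ) → ℝ) (k : Fin n) (x : Fin n → ℝ) : ℝ :=
  ∑ s, (v s x * pd s (w k) x - w s x * pd s (v k) x)

/-- `v₁ = ∂_y`. -/
def sl2v1 : Fin 2 → (Fin 2 → ℝ) → ℝ := fun k _ => if k = 1 then 1 else 0
/-- `v₂ = x∂_x + y∂_y`. -/
def sl2v2 : Fin 2 → (Fin 2 → ℝ) → ℝ := fun k x => if k = 0 then x 0 else x 1
/-- `v₃ = 2xy∂_x + y²∂_y`. -/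
def sl2v3 : Fin 2 → (Fin 2 → ℝ) → ℝ := fun k x => if k = 0 then 2 * x 0 * x 1 else (x 1)^2

lemma pd_of_hasFDerivAt {n : ℕ} {f : (Fin n → ℝ) → ℝ} {L : (Fin n → ℝ) →L[ℝ] ℝ}
    {x : Fin n → ℝ} (h : HasFDerivAt f L x) (i : Fin n) :
    pd i f x = L (Pi.single i 1) := by
  unfold pd; rw [h.fderiv]

lemma hasFDerivAt_coord {n : ℕ} (j : Fin n) (x : Fin n → ℝ) :
    HasFDerivAt (fun y : Fin n → ℝ => y j)
      (ContinuousLinearMap.proj j : (Fin n → ℝ) →L[ℝ] ℝ) x :=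
  (ContinuousLinearMap.proj j : (Fin n → ℝ) →L[ℝ] ℝ).hasFDerivAt

lemma pd_coord {n : ℕ} (i j : Fin n) (x : Fin n → ℝ) :
    pd i (fun y => y j) x = if j = i then 1 else 0 := by
  rw [pd_of_hasFDerivAt (hasFDerivAt_coord j x)]
  simp [Pi.single_apply]

lemma pd_const {n : ℕ} (i : Fin n) (c : ℝ) (x : Fin n → ℝ) :
    pd i (fun _ => c) x = 0 := by
  rw [pd_of_hasFDerivAt (hasFDerivAt_const c x) i]; simp

lemma pd_congr_eventually {n : ℕ} {f f' : (Fin n → ℝ) → ℝ} {x : Fin n → ℝ}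
    (h : f =ᶠ[nhds x] f') (i : Fin n) : pd i f x = pd i f' x := by
  unfold pd; rw [h.fderiv_eq]

-- derivative of c * y 0 over Fin 2

lemma hasFD_cmul0 (c : ℝ) (x : Fin 2 → ℝ) :
    HasFDerivAt (fun y : Fin 2 → ℝ => c * y 0)
      (c • (ContinuousLinearMap.proj 0 : (Fin 2 → ℝ) →L[ℝ] ℝ)) x :=
  (hasFDerivAt_coord 0 x).const_mul c

lemma pd_cmul0 (c : ℝ) (i : Fin 2) (x : Fin 2 → ℝ) :
    pd i (fun y => c * y 0) x = if i = 0 then c else 0 := by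
  rw [pd_of_hasFDerivAt (hasFD_cmul0 c x)]
  fin_cases i <;> simp [Pi.single_apply]

lemma hasFD_inv0 (x : Fin 2 → ℝ) (hx : x 0 ≠ 0) :
    HasFDerivAt (fun y : Fin 2 → ℝ => (y 0)⁻¹)
      ((-ContinuousLinearMap.mulLeftRight ℝ ℝ (x 0)⁻¹ (x 0)⁻¹).comp
        (ContinuousLinearMap.proj 0)) x :=
  (hasFDerivAt_inv' hx).comp x (hasFDerivAt_coord 0 x)

lemma pd_inv0 (i : Fin 2) (x : Fin 2 → ℝ) (hx : x 0 ≠ 0) :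
    pd i (fun y => (y 0)⁻¹) x = if i = 0 then -((x 0)^2)⁻¹ else 0 := by
  rw [pd_of_hasFDerivAt (hasFD_inv0 x hx)]
  fin_cases i <;> simp [Pi.single_apply] <;> field_simp <;> ring

lemma pd_cmul_inv0 (c : ℝ) (i : Fin 2) (x : Fin 2 → ℝ) (hx : x 0 ≠ 0) :
    pd i (fun y => c * (y 0)⁻¹) x = if i = 0 then -c * ((x 0)^2)⁻¹ else 0 := by
  rw [pd_of_hasFDerivAt ((hasFD_inv0 x hx).const_mul c)]
  fin_cases i <;> simp [Pi.single_apply] <;> field_simp <;> ring_nf <;> tauto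

lemma pd_2inv0 (i : Fin 2) (x : Fin 2 → ℝ) (hx : x 0 ≠ 0) :
    pd i (fun y => (2 * y 0)⁻¹) x = if i = 0 then -(2*(x 0)^2)⁻¹ else 0 := by
  have h2 : (2:ℝ) * x 0 ≠ 0 := by positivity
  have h : HasFDerivAt (fun y : Fin 2 → ℝ => (2 * y 0)⁻¹)
      ((-ContinuousLinearMap.mulLeftRight ℝ ℝ (2 * x 0)⁻¹ (2 * x 0)⁻¹).comp
        ((2:ℝ) • (ContinuousLinearMap.proj 0 : (Fin 2 → ℝ) →L[ℝ] ℝ))) x :=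
    (hasFDerivAt_inv' h2).comp x (hasFD_cmul0 2 x)
  rw [pd_of_hasFDerivAt h]
  fin_cases i <;> simp [Pi.single_apply] <;> field_simp <;> ring

lemma pd_mul01 (i : Fin 2) (x : Fin 2 → ℝ) :
    pd i (fun y => 2 * y 0 * y 1) x = if i = 0 then 2 * x 1 else 2 * x 0 := by
  have h : HasFDerivAt (fun y : Fin 2 → ℝ => 2 * y 0 * y 1)
      ((2 * x 0) • (ContinuousLinearMap.proj 1 : (Fin 2 → ℝ) →L[ℝ] ℝ)
        + (x 1) • ((2:ℝ) • (ContinuousLinearMap.proj 0 : (Fin 2 → ℝ) →L[ℝ] ℝ))) x :=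
    (hasFD_cmul0 2 x).mul (hasFDerivAt_coord 1 x)
  rw [pd_of_hasFDerivAt h]
  fin_cases i <;> simp [Pi.single_apply] <;> ring

lemma pd_sq1 (i : Fin 2) (x : Fin 2 → ℝ) :
    pd i (fun y => (y 1)^2) x = if i = 1 then 2 * x 1 else 0 := by
  have h : HasFDerivAt (fun y : Fin 2 → ℝ => (y 1)^2)
      ((x 1) • (ContinuousLinearMap.proj 1 : (Fin 2 → ℝ) →L[ℝ] ℝ)
        + (x 1) • (ContinuousLinearMap.proj 1 : (Fin 2 → ℝ) →L[ℝ] ℝ)) x := by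
    have h2 : HasFDerivAt (fun y : Fin 2 → ℝ => y 1 * y 1)
        ((x 1) • (ContinuousLinearMap.proj 1 : (Fin 2 → ℝ) →L[ℝ] ℝ)
          + (x 1) • (ContinuousLinearMap.proj 1 : (Fin 2 → ℝ) →L[ℝ] ℝ)) x :=
      (hasFDerivAt_coord 1 x).mul (hasFDerivAt_coord 1 x)
    simpa [pow_two] using h2
  rw [pd_of_hasFDerivAt h]
  fin_cases i <;> simp [Pi.single_apply] <;> ring

lemma hasFD_cmul1 (c : ℝ) (x : Fin 2 → ℝ) :
    HasFDerivAt (fun y : Fin 2 → ℝ => c * y 1)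
      (c • (ContinuousLinearMap.proj 1 : (Fin 2 → ℝ) →L[ℝ] ℝ)) x :=
  (hasFDerivAt_coord 1 x).const_mul c

lemma pd_cmul1 (c : ℝ) (i : Fin 2) (x : Fin 2 → ℝ) :
    pd i (fun y => c * y 1) x = if i = 1 then c else 0 := by
  rw [pd_of_hasFDerivAt (hasFD_cmul1 c x)]
  fin_cases i <;> simp [Pi.single_apply]

lemma g2D_fun00 (ε : ℝ) : (fun y : Fin 2 → ℝ => g2D ε y 0 0) = fun y => y 0 := by
  funext y; simp [g2D]

lemma g2D_fun11 (ε : ℝ) : (fun y : Fin 2 → ℝ => g2D ε y 1 1) = fun y => (-2*ε) * y 0 := by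
  funext y; simp [g2D]

lemma g2D_fun01 (ε : ℝ) : (fun y : Fin 2 → ℝ => g2D ε y 0 1) = fun _ => (0:ℝ) := by
  funext y; simp [g2D]

lemma g2D_fun10 (ε : ℝ) : (fun y : Fin 2 → ℝ => g2D ε y 1 0) = fun _ => (0:ℝ) := by
  funext y; simp [g2D]

lemma g2D_inv (ε : ℝ) (hε0 : ε ≠ 0) (x : Fin 2 → ℝ) (hx : x 0 ≠ 0) :
    (g2D ε x)⁻¹ = !![(x 0)⁻¹, 0; 0, (-2*ε*x 0)⁻¹] := by
  apply Matrix.inv_eq_right_inv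
  have h2 : -2*ε*x 0 ≠ 0 := mul_ne_zero (mul_ne_zero (by norm_num) hε0) hx
  ext i j
  fin_cases i <;> fin_cases j <;>
    simp [g2D, Matrix.mul_apply, Fin.sum_univ_two, hx, h2] <;> try field_simp

def Γv (ε : ℝ) (k i j : Fin 2) (x : Fin 2 → ℝ) : ℝ :=
  if k = 0 then
    (if i = 0 ∧ j = 0 then (2 * x 0)⁻¹ else if i = 1 ∧ j = 1 then ε * (x 0)⁻¹ else 0)
  else
    (if (i = 0 ∧ j = 1) ∨ (i = 1 ∧ j = 0) then (2 * x 0)⁻¹ else 0)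

lemma pd_g00 (ε : ℝ) (i : Fin 2) (x : Fin 2 → ℝ) :
    pd i (fun y => g2D ε y 0 0) x = if i = 0 then 1 else 0 := by
  rw [g2D_fun00, pd_coord]; fin_cases i <;> simp

lemma pd_g11 (ε : ℝ) (i : Fin 2) (x : Fin 2 → ℝ) :
    pd i (fun y => g2D ε y 1 1) x = if i = 0 then -2*ε else 0 := by
  rw [g2D_fun11, pd_cmul0]

lemma pd_g01 (ε : ℝ) (i : Fin 2) (x : Fin 2 → ℝ) :
    pd i (fun y => g2D ε y 0 1) x = 0 := by
  rw [g2D_fun01, pd_const]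

lemma pd_g10 (ε : ℝ) (i : Fin 2) (x : Fin 2 → ℝ) :
    pd i (fun y => g2D ε y 1 0) x = 0 := by
  rw [g2D_fun10, pd_const]

lemma christoffel_g2D (ε : ℝ) (hε0 : ε ≠ 0) (x : Fin 2 → ℝ) (hx : x 0 ≠ 0)
    (k i j : Fin 2) : christoffel (g2D ε) k i j x = Γv ε k i j x := by
  unfold christoffel
  rw [Fin.sum_univ_two, g2D_inv ε hε0 x hx]
  fin_cases k <;> fin_cases i <;> fin_cases j <;>
    simp only [Fin.mk_zero, Fin.mk_one, Fin.isValue, pd_g00, pd_g01, pd_g10, pd_g11, Γv] <;>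
    norm_num <;> field_simp <;> ring

lemma chr_eventually (ε : ℝ) (hε0 : ε ≠ 0) (x : Fin 2 → ℝ) (hx : x 0 ≠ 0)
    (k i j : Fin 2) : christoffel (g2D ε) k i j =ᶠ[nhds x] Γv ε k i j := by
  have hopen : IsOpen {y : Fin 2 → ℝ | y 0 ≠ 0} :=
    isOpen_compl_singleton.preimage (continuous_apply 0)
  filter_upwards [hopen.mem_nhds hx] with y hy
  exact christoffel_g2D ε hε0 y hy k i j

lemma Γv000 (ε : ℝ) : Γv ε 0 0 0 = fun x => (2 * x 0)⁻¹ := by funext x; simp [Γv]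

lemma Γv011 (ε : ℝ) : Γv ε 0 1 1 = fun x => ε * (x 0)⁻¹ := by funext x; simp [Γv]

lemma Γv101 (ε : ℝ) : Γv ε 1 0 1 = fun x => (2 * x 0)⁻¹ := by funext x; simp [Γv]

lemma Γv110 (ε : ℝ) : Γv ε 1 1 0 = fun x => (2 * x 0)⁻¹ := by funext x; simp [Γv]

lemma Γv001 (ε : ℝ) : Γv ε 0 0 1 = fun _ => (0:ℝ) := by funext x; simp [Γv]

lemma Γv010 (ε : ℝ) : Γv ε 0 1 0 = fun _ => (0:ℝ) := by funext x; simp [Γv]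

lemma Γv100 (ε : ℝ) : Γv ε 1 0 0 = fun _ => (0:ℝ) := by funext x; simp [Γv]

lemma Γv111 (ε : ℝ) : Γv ε 1 1 1 = fun _ => (0:ℝ) := by funext x; simp [Γv]

def Γd (ε : ℝ) (k i j : Fin 2) (x : Fin 2 → ℝ) : ℝ :=
  if k = 0 then
    (if i = 0 ∧ j = 0 then -(2*(x 0)^2)⁻¹ else if i = 1 ∧ j = 1 then -ε * ((x 0)^2)⁻¹ else 0)
  else
    (if (i = 0 ∧ j = 1) ∨ (i = 1 ∧ j = 0) then -(2*(x 0)^2)⁻¹ else 0)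

lemma pd_chr (ε : ℝ) (hε0 : ε ≠ 0) (x : Fin 2 → ℝ) (hx : x 0 ≠ 0)
    (s k i j : Fin 2) :
    pd s (christoffel (g2D ε) k i j) x = if s = 0 then Γd ε k i j x else 0 := by
  rw [pd_congr_eventually (chr_eventually ε hε0 x hx k i j)]
  fin_cases k <;> fin_cases i <;> fin_cases j <;>
    simp only [Fin.mk_zero, Fin.mk_one, Fin.isValue, Γv000, Γv001, Γv010, Γv011,
      Γv100, Γv101, Γv110, Γv111] <;>
    (first
      | rw [pd_2inv0 s x hx]
      | rw [pd_cmul_inv0 ε s x hx]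
      | rw [pd_const]) <;>
    simp [Γd] <;> split <;> ring

lemma pd_v1 (i k : Fin 2) (x : Fin 2 → ℝ) : pd i (sl2v1 k) x = 0 := by
  have : sl2v1 k = fun _ => if k = 1 then (1:ℝ) else 0 := rfl
  rw [this, pd_const]

lemma pd2_v1 (i j k : Fin 2) (x : Fin 2 → ℝ) :
    pd i (fun y => pd j (sl2v1 k) y) x = 0 := by
  have : (fun y => pd j (sl2v1 k) y) = fun _ => (0:ℝ) := by
    funext y; exact pd_v1 j k y
  rw [this, pd_const]

lemma v2fun0 : sl2v2 0 = fun x => x 0 := by funext x; simp [sl2v2]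

lemma v2fun1 : sl2v2 1 = fun x => x 1 := by funext x; simp [sl2v2]

lemma pd_v2 (i k : Fin 2) (x : Fin 2 → ℝ) :
    pd i (sl2v2 k) x = if k = i then 1 else 0 := by
  fin_cases k
  · show pd i (sl2v2 0) x = if (0:Fin 2) = i then 1 else 0
    rw [v2fun0, pd_coord]
  · show pd i (sl2v2 1) x = if (1:Fin 2) = i then 1 else 0
    rw [v2fun1, pd_coord]

lemma pd2_v2 (i j k : Fin 2) (x : Fin 2 → ℝ) :
    pd i (fun y => pd j (sl2v2 k) y) x = 0 := by
  have : (fun y => pd j (sl2v2 k) y) = fun _ => if k = j then (1:ℝ) else 0 := by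
    funext y; exact pd_v2 j k y
  rw [this, pd_const]

lemma v3fun0 : sl2v3 0 = fun x => 2 * x 0 * x 1 := by funext x; simp [sl2v3]

lemma v3fun1 : sl2v3 1 = fun x => (x 1)^2 := by funext x; simp [sl2v3]

lemma pd_v3_0 (i : Fin 2) (x : Fin 2 → ℝ) :
    pd i (sl2v3 0) x = if i = 0 then 2 * x 1 else 2 * x 0 := by
  rw [v3fun0]; exact pd_mul01 i x

lemma pd_v3_1 (i : Fin 2) (x : Fin 2 → ℝ) :
    pd i (sl2v3 1) x = if i = 1 then 2 * x 1 else 0 := by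
  rw [v3fun1]; exact pd_sq1 i x

lemma pd2_v3_0 (i j : Fin 2) (x : Fin 2 → ℝ) :
    pd i (fun y => pd j (sl2v3 0) y) x =
      if (i = 0 ∧ j = 1) ∨ (i = 1 ∧ j = 0) then 2 else 0 := by
  have h : (fun y => pd j (sl2v3 0) y) =
      fun y => if j = 0 then 2 * y 1 else 2 * y 0 := by
    funext y; rw [pd_v3_0]
  rw [h]
  fin_cases j
  · show pd i (fun y => if (0:Fin 2) = 0 then 2 * y 1 else 2 * y 0) x
        = if (i = 0 ∧ (0:Fin 2) = 1) ∨ (i = 1 ∧ (0:Fin 2) = 0) then 2 else 0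
    have h2 : (fun y : Fin 2 → ℝ => if (0:Fin 2) = 0 then 2 * y 1 else 2 * y 0)
        = fun y => 2 * y 1 := by funext y; simp
    rw [h2, pd_cmul1]; fin_cases i <;> simp
  · show pd i (fun y => if (1:Fin 2) = 0 then 2 * y 1 else 2 * y 0) x
        = if (i = 0 ∧ (1:Fin 2) = 1) ∨ (i = 1 ∧ (1:Fin 2) = 0) then 2 else 0
    have h2 : (fun y : Fin 2 → ℝ => if (1:Fin 2) = 0 then 2 * y 1 else 2 * y 0)
        = fun y => 2 * y 0 := by funext y; simp
    rw [h2, pd_cmul0]; fin_cases i <;> simp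

lemma pd2_v3_1 (i j : Fin 2) (x : Fin 2 → ℝ) :
    pd i (fun y => pd j (sl2v3 1) y) x = if i = 1 ∧ j = 1 then 2 else 0 := by
  have h : (fun y => pd j (sl2v3 1) y) =
      fun y => if j = 1 then 2 * y 1 else 0 := by
    funext y; rw [pd_v3_1]
  rw [h]
  fin_cases j
  · show pd i (fun y => if (0:Fin 2) = 1 then 2 * y 1 else 0) x
        = if i = 1 ∧ (0:Fin 2) = 1 then 2 else 0
    have h2 : (fun y : Fin 2 → ℝ => if (0:Fin 2) = 1 then 2 * y 1 else 0)
        = fun _ => (0:ℝ) := by funext y; simp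
    rw [h2, pd_const]; simp
  · show pd i (fun y => if (1:Fin 2) = 1 then 2 * y 1 else 0) x
        = if i = 1 ∧ (1:Fin 2) = 1 then 2 else 0
    have h2 : (fun y : Fin 2 → ℝ => if (1:Fin 2) = 1 then 2 * y 1 else 0)
        = fun y => 2 * y 1 := by funext y; simp
    rw [h2, pd_cmul1]; fin_cases i <;> simp

lemma pd2_v3 (i j k : Fin 2) (x : Fin 2 → ℝ) :
    pd i (fun y => pd j (sl2v3 k) y) x =
      if k = 0 then (if (i = 0 ∧ j = 1) ∨ (i = 1 ∧ j = 0) then 2 else 0)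
      else (if i = 1 ∧ j = 1 then 2 else 0) := by
  fin_cases k
  · show pd i (fun y => pd j (sl2v3 0) y) x = _
    rw [pd2_v3_0]; simp
  · show pd i (fun y => pd j (sl2v3 1) y) x = _
    rw [pd2_v3_1]; simp

lemma pd_v3 (i k : Fin 2) (x : Fin 2 → ℝ) :
    pd i (sl2v3 k) x =
      if k = 0 then (if i = 0 then 2 * x 1 else 2 * x 0)
      else (if i = 1 then 2 * x 1 else 0) := by
  fin_cases k
  · show pd i (sl2v3 0) x = _
    rw [pd_v3_0]; simp
  · show pd i (sl2v3 1) x = _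
    rw [pd_v3_1]; simp

lemma lieConn_v1 (ε : ℝ) (hε0 : ε ≠ 0) (k i j : Fin 2) (x : Fin 2 → ℝ)
    (hx : x 0 ≠ 0) : lieConn sl2v1 (christoffel (g2D ε)) k i j x = 0 := by
  unfold lieConn
  rw [Fin.sum_univ_two, pd2_v1]
  simp only [pd_chr ε hε0 x hx, christoffel_g2D ε hε0 x hx, pd_v1, sl2v1]
  simp

lemma lieConn_v2 (ε : ℝ) (hε0 : ε ≠ 0) (k i j : Fin 2) (x : Fin 2 → ℝ)
    (hx : x 0 ≠ 0) : lieConn sl2v2 (christoffel (g2D ε)) k i j x = 0 := by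
  unfold lieConn
  rw [Fin.sum_univ_two, pd2_v2]
  simp only [pd_chr ε hε0 x hx, christoffel_g2D ε hε0 x hx, pd_v2, sl2v2]
  fin_cases k <;> fin_cases i <;> fin_cases j <;>
    (simp only [Γv, Γd]; norm_num; try field_simp; try ring)

lemma lieConn_v3 (ε : ℝ) (hε0 : ε ≠ 0) (k i j : Fin 2) (x : Fin 2 → ℝ)
    (hx : x 0 ≠ 0) :
    lieConn sl2v3 (christoffel (g2D ε)) k i j x =
      (if k = i then (if j = 1 then 2 else 0) else 0) +
      (if k = j then (if i = 1 then 2 else 0) else 0) := by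
  unfold lieConn
  rw [Fin.sum_univ_two, pd2_v3]
  simp only [pd_chr ε hε0 x hx, christoffel_g2D ε hε0 x hx, pd_v3, sl2v3]
  fin_cases k <;> fin_cases i <;> fin_cases j <;>
    (simp only [Γv, Γd]; norm_num; try field_simp; try ring)

/-- the fields `∂_y, x∂_x + y∂_y, 2xy∂_x + y²∂_y` are linearly
independent, close to a Lie algebra isomorphic to `sl(2,ℝ)` (same structure
constants as a triple of trace-free matrices), and each one is a projective
vector field of `g = x dx² − 2εx dy²` on `{x > 0}`. -/
theorem g2D_sl2_projective (ε : ℝ) (hε : ε = 1 ∨ ε = -1) :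
    LinearIndependent ℝ ![sl2v1, sl2v2, sl2v3] ∧
    (∀ k x, vfBracket sl2v1 sl2v2 k x = sl2v1 k x) ∧
    (∀ k x, vfBracket sl2v1 sl2v3 k x = 2 * sl2v2 k x) ∧
    (∀ k x, vfBracket sl2v2 sl2v3 k x = sl2v3 k x) ∧
    (∃ E H F : Matrix (Fin 2) (Fin 2) ℝ,
      E.trace = 0 ∧ H.trace = 0 ∧ F.trace = 0 ∧
      LinearIndependent ℝ ![E, H, F] ∧
      E * H - H * E = E ∧ E * F - F * E = (2 : ℝ) • H ∧ H * F - F * H = F) ∧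
    (∀ v ∈ ({sl2v1, sl2v2, sl2v3} : Set (Fin 2 → (Fin 2 → ℝ) → ℝ)),
      ∃ φ : Fin 2 → (Fin 2 → ℝ) → ℝ, ∀ (k i j : Fin 2) (x : Fin 2 → ℝ), 0 < x 0 →
        lieConn v (christoffel (g2D ε)) k i j x =
          (if k = i then φ j x else 0) + (if k = j then φ i x else 0)) := by
  have hε0 : ε ≠ 0 := by rcases hε with rfl | rfl <;> norm_num
  refine ⟨?_, ?_, ?_, ?_, ?_, ?_⟩
  · rw [Fintype.linearIndependent_iff]
    intro c hc
    rw [Fin.sum_univ_three] at hc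
    simp only [Matrix.cons_val_zero, Matrix.cons_val_one, Matrix.head_cons,
      Matrix.cons_val_two, Matrix.tail_cons] at hc
    have e0 := congrFun (congrFun hc 1) ![0, 0]
    have e1 := congrFun (congrFun hc 1) ![0, 1]
    have e2 := congrFun (congrFun hc 1) ![0, (-1 : ℝ)]
    simp [sl2v1, sl2v2, sl2v3] at e0 e1 e2
    intro i; fin_cases i <;> simp <;> linarith
  · intro k x
    unfold vfBracket
    rw [Fin.sum_univ_two]
    simp only [pd_v1, pd_v2, sl2v1, sl2v2]
    fin_cases k <;> norm_num
  · intro k x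
    unfold vfBracket
    rw [Fin.sum_univ_two]
    simp only [pd_v1, pd_v3, sl2v1, sl2v2, sl2v3]
    fin_cases k <;> norm_num <;> ring
  · intro k x
    unfold vfBracket
    rw [Fin.sum_univ_two]
    simp only [pd_v2, pd_v3, sl2v2, sl2v3]
    fin_cases k <;> norm_num <;> ring
  · refine ⟨!![0, 1; 0, 0], !![-(1:ℝ)/2, 0; 0, 1/2], !![0, 0; -1, 0], ?_, ?_, ?_, ?_, ?_, ?_, ?_⟩
    · simp [Matrix.trace_fin_two]
    · simp [Matrix.trace_fin_two]; ring
    · simp [Matrix.trace_fin_two]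
    · rw [Fintype.linearIndependent_iff]
      intro c hc
      rw [Fin.sum_univ_three] at hc
      simp only [Matrix.cons_val_zero, Matrix.cons_val_one, Matrix.head_cons,
        Matrix.cons_val_two, Matrix.tail_cons] at hc
      have e0 := congrFun (congrFun hc 0) 1
      have e1 := congrFun (congrFun hc 0) 0
      have e2 := congrFun (congrFun hc 1) 0
      simp [Matrix.smul_apply] at e0 e1 e2
      intro i; fin_cases i <;> simp <;> linarith
    · ext i j; fin_cases i <;> fin_cases j <;>
        simp [Matrix.mul_apply, Fin.sum_univ_two] <;> norm_num
    · ext i j; fin_cases i <;> fin_cases j <;>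
        simp [Matrix.mul_apply, Fin.sum_univ_two] <;> norm_num
    · ext i j; fin_cases i <;> fin_cases j <;>
        simp [Matrix.mul_apply, Fin.sum_univ_two] <;> norm_num
  · intro v hv
    simp only [Set.mem_insert_iff, Set.mem_singleton_iff] at hv
    rcases hv with rfl | rfl | rfl
    · exact ⟨fun _ _ => 0, fun k i j x hx => by
        rw [lieConn_v1 ε hε0 k i j x hx.ne']; simp⟩
    · exact ⟨fun _ _ => 0, fun k i j x hx => by
        rw [lieConn_v2 ε hε0 k i j x hx.ne']; simp⟩
    · exact ⟨fun i _ => if i = 1 then 2 else 0, fun k i j x hx => by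
        rw [lieConn_v3 ε hε0 k i j x hx.ne']⟩
end
end

section
/- On a 2-dimensional pseudo-Riemannian manifold whose curvature is nonzero at every point, every affine vector field is a homothety, i.e., 𝔞(g) = H(g). -/
noncomputable section

open scoped BigOperators

/-! ### pd toolkit -/

section PD
variable {n : ℕ} {f h : (Fin n → ℝ) → ℝ} {x : Fin n → ℝ} {i : Fin n}

lemma pd_congr_nhds (hfh : f =ᶠ[nhds x] h) : pd i f x = pd i h x := by
  unfold pd; rw [Filter.EventuallyEq.fderiv_eq hfh]

lemma pd_add (hf : DifferentiableAt ℝ f x) (hh : DifferentiableAt ℝ h x) :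
    pd i (fun y => f y + h y) x = pd i f x + pd i h x := by
  unfold pd; rw [fderiv_fun_add hf hh]; rfl

lemma pd_mul (hf : DifferentiableAt ℝ f x) (hh : DifferentiableAt ℝ h x) :
    pd i (fun y => f y * h y) x = f x * pd i h x + h x * pd i f x := by
  unfold pd; rw [fderiv_fun_mul hf hh]; rfl

lemma contDiff_pd {m : ℕ} (hf : ContDiff ℝ (m + 1 : ℕ) f) : ContDiff ℝ (m : ℕ) (pd i f) := by
  have h1 : ContDiff ℝ (m : ℕ) (fderiv ℝ f) := hf.fderiv_right (by exact_mod_cast le_rfl)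
  exact h1.clm_apply contDiff_const

lemma contDiffAt_pd {m : ℕ} (hf : ContDiffAt ℝ (m + 1 : ℕ) f x) :
    ContDiffAt ℝ (m : ℕ) (pd i f) x := by
  have h1 : ContDiffAt ℝ (m : ℕ) (fderiv ℝ f) x := hf.fderiv_right (by exact_mod_cast le_rfl)
  exact h1.clm_apply contDiffAt_const

lemma pd_comm {j : Fin n} (hf : ContDiffAt ℝ 2 f x) :
    pd i (fun y => pd j f y) x = pd j (fun y => pd i f y) x := by
  have hd : DifferentiableAt ℝ (fderiv ℝ f) x :=
    (hf.fderiv_right (m := 1) (by norm_num)).differentiableAt (by norm_num)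
  have e : ∀ a b : Fin n, pd a (fun y => pd b f y) x =
      fderiv ℝ (fderiv ℝ f) x (Pi.single a 1) (Pi.single b 1) := by
    intro a b
    unfold pd
    rw [fderiv_clm_apply hd (differentiableAt_const _)]
    simp
  rw [e, e, (hf.isSymmSndFDerivAt (by norm_num)).eq]

end PD

/-! ### master product-rule expansion lemmas -/

section Masters
variable {x : Fin 2 → ℝ} {s : Fin 2}

lemma pd_mul_add4 (a1 b1 a2 b2 a3 b3 a4 b4 : (Fin 2 → ℝ) → ℝ)
    (d1 : DifferentiableAt ℝ a1 x) (d2 : DifferentiableAt ℝ b1 x)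
    (d3 : DifferentiableAt ℝ a2 x) (d4 : DifferentiableAt ℝ b2 x)
    (d5 : DifferentiableAt ℝ a3 x) (d6 : DifferentiableAt ℝ b3 x)
    (d7 : DifferentiableAt ℝ a4 x) (d8 : DifferentiableAt ℝ b4 x) :
    pd s (fun y => (a1 y * b1 y + a2 y * b2 y) + (a3 y * b3 y + a4 y * b4 y)) x
      = ((a1 x * pd s b1 x + b1 x * pd s a1 x) + (a2 x * pd s b2 x + b2 x * pd s a2 x))
        + ((a3 x * pd s b3 x + b3 x * pd s a3 x) + (a4 x * pd s b4 x + b4 x * pd s a4 x)) := by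
  rw [pd_add ((d1.fun_mul d2).fun_add (d3.fun_mul d4)) ((d5.fun_mul d6).fun_add (d7.fun_mul d8)),
    pd_add (d1.fun_mul d2) (d3.fun_mul d4), pd_add (d5.fun_mul d6) (d7.fun_mul d8),
    pd_mul d1 d2, pd_mul d3 d4, pd_mul d5 d6, pd_mul d7 d8]

lemma pd_mul_add6 (a1 b1 a2 b2 a3 b3 a4 b4 a5 b5 a6 b6 : (Fin 2 → ℝ) → ℝ)
    (d1 : DifferentiableAt ℝ a1 x) (d2 : DifferentiableAt ℝ b1 x)
    (d3 : DifferentiableAt ℝ a2 x) (d4 : DifferentiableAt ℝ b2 x)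
    (d5 : DifferentiableAt ℝ a3 x) (d6 : DifferentiableAt ℝ b3 x)
    (d7 : DifferentiableAt ℝ a4 x) (d8 : DifferentiableAt ℝ b4 x)
    (d9 : DifferentiableAt ℝ a5 x) (d10 : DifferentiableAt ℝ b5 x)
    (d11 : DifferentiableAt ℝ a6 x) (d12 : DifferentiableAt ℝ b6 x) :
    pd s (fun y => (a1 y * b1 y + a2 y * b2 y + a3 y * b3 y)
        + (a4 y * b4 y + a5 y * b5 y + a6 y * b6 y)) x
      = ((a1 x * pd s b1 x + b1 x * pd s a1 x) + (a2 x * pd s b2 x + b2 x * pd s a2 x)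
          + (a3 x * pd s b3 x + b3 x * pd s a3 x))
        + ((a4 x * pd s b4 x + b4 x * pd s a4 x) + (a5 x * pd s b5 x + b5 x * pd s a5 x)
          + (a6 x * pd s b6 x + b6 x * pd s a6 x)) := by
  rw [pd_add (((d1.fun_mul d2).fun_add (d3.fun_mul d4)).fun_add (d5.fun_mul d6))
      (((d7.fun_mul d8).fun_add (d9.fun_mul d10)).fun_add (d11.fun_mul d12)),
    pd_add ((d1.fun_mul d2).fun_add (d3.fun_mul d4)) (d5.fun_mul d6),
    pd_add ((d7.fun_mul d8).fun_add (d9.fun_mul d10)) (d11.fun_mul d12),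
    pd_add (d1.fun_mul d2) (d3.fun_mul d4), pd_add (d7.fun_mul d8) (d9.fun_mul d10),
    pd_mul d1 d2, pd_mul d3 d4, pd_mul d5 d6, pd_mul d7 d8, pd_mul d9 d10, pd_mul d11 d12]

end Masters

/-! ### matrix facts -/

section MatrixFacts
open Matrix
variable {g : (Fin 2 → ℝ) → Matrix (Fin 2) (Fin 2) ℝ}

lemma inv_entry (x : Fin 2 → ℝ) (i j : Fin 2) :
    (g x)⁻¹ i j = (g x).det⁻¹ * (g x).adjugate i j := by
  rw [Matrix.inv_def, Ring.inverse_eq_inv]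
  simp [Matrix.smul_apply, smul_eq_mul]

lemma contDiff_det (hsm : ∀ i j, ContDiff ℝ (⊤ : ℕ∞) (fun x => g x i j)) (m : ℕ) :
    ContDiff ℝ (m : ℕ) (fun x => (g x).det) := by
  have h : (fun x => (g x).det) = fun x => g x 0 0 * g x 1 1 - g x 0 1 * g x 1 0 := by
    funext x; rw [Matrix.det_fin_two]
  rw [h]
  exact (((hsm 0 0).of_le (by exact_mod_cast le_top)).mul ((hsm 1 1).of_le (by exact_mod_cast le_top))).sub
    (((hsm 0 1).of_le (by exact_mod_cast le_top)).mul ((hsm 1 0).of_le (by exact_mod_cast le_top)))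

lemma openV (hsm : ∀ i j, ContDiff ℝ (⊤ : ℕ∞) (fun x => g x i j)) :
    IsOpen {y : Fin 2 → ℝ | (g y).det ≠ 0} := by
  have h : {y : Fin 2 → ℝ | (g y).det ≠ 0} = (fun y => (g y).det) ⁻¹' {(0:ℝ)}ᶜ := rfl
  rw [h]
  exact ((contDiff_det hsm 0).continuous).isOpen_preimage _ isOpen_compl_singleton

lemma contDiffAt_inv_entry (hsm : ∀ i j, ContDiff ℝ (⊤ : ℕ∞) (fun x => g x i j)) (m : ℕ)
    {x : Fin 2 → ℝ} (hx : (g x).det ≠ 0) (i j : Fin 2) :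
    ContDiffAt ℝ (m : ℕ) (fun y => (g y)⁻¹ i j) x := by
  have h1 : (fun y => (g y)⁻¹ i j) = fun y => ((g y).det)⁻¹ * (g y).adjugate i j := by
    funext y; exact inv_entry y i j
  rw [h1]
  have hdet : ContDiffAt ℝ (m:ℕ) (fun y => ((g y).det)⁻¹) x :=
    ((contDiff_det hsm m).contDiffAt).inv hx
  have hadj : ContDiffAt ℝ (m:ℕ) (fun y => (g y).adjugate i j) x := by
    have h2 : (fun y => (g y).adjugate i j) =
        fun y => !![g y 1 1, -(g y 0 1); -(g y 1 0), g y 0 0] i j := by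
      funext y; rw [Matrix.adjugate_fin_two]
    rw [h2]
    fin_cases i <;> fin_cases j <;> simp [Matrix.cons_val_zero, Matrix.cons_val_one] <;>
      first
        | exact ((hsm 1 1).of_le (by exact_mod_cast le_top)).contDiffAt
        | exact (((hsm 0 1).of_le (by exact_mod_cast le_top)).contDiffAt).neg
        | exact (((hsm 1 0).of_le (by exact_mod_cast le_top)).contDiffAt).neg
        | exact ((hsm 0 0).of_le (by exact_mod_cast le_top)).contDiffAt
  exact hdet.mul hadj

lemma inv_symm_entry (hsym : ∀ x, (g x).IsSymm) (x : Fin 2 → ℝ) (i j : Fin 2) :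
    (g x)⁻¹ i j = (g x)⁻¹ j i := by
  have h1 : (g x)⁻¹ᵀ = (g x)⁻¹ := by
    rw [Matrix.transpose_nonsing_inv, (hsym x).eq]
  conv_lhs => rw [← h1]
  rfl

lemma inv_mul_entry {x : Fin 2 → ℝ} (hx : (g x).det ≠ 0) (m j : Fin 2) :
    (g x)⁻¹ m 0 * g x 0 j + (g x)⁻¹ m 1 * g x 1 j = if m = j then 1 else 0 := by
  have h1 := Matrix.nonsing_inv_mul (g x) (isUnit_iff_ne_zero.mpr hx)
  have h2 := congrFun (congrFun h1 m) j
  rw [Matrix.mul_apply, Fin.sum_univ_two] at h2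
  rw [h2, Matrix.one_apply]

end MatrixFacts

/-! ### Identity A : metric compatibility ∂ₖ g = Γ g + Γ g -/

lemma IdA {g : (Fin 2 → ℝ) → Matrix (Fin 2) (Fin 2) ℝ}
    (hsym : ∀ x, (g x).IsSymm) {x : Fin 2 → ℝ} (hx : (g x).det ≠ 0) :
    ∀ k i j : Fin 2, pd k (fun y => g y i j) x
      = ∑ l, (christoffel g l k i x * g x l j + christoffel g l k j x * g x i l) := by
  have hGs : g x 1 0 = g x 0 1 := (hsym x).apply 0 1
  have eGis : (g x)⁻¹ 1 0 = (g x)⁻¹ 0 1 := inv_symm_entry hsym x 1 0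
  have gfs : (fun y => g y (1:Fin 2) (0:Fin 2)) = fun y => g y 0 1 :=
    funext fun y => (hsym y).apply 0 1
  have ePs : ∀ k : Fin 2, pd k (fun y => g y 1 0) x = pd k (fun y => g y 0 1) x :=
    fun k => by rw [gfs]
  have eI00 : (g x)⁻¹ 0 0 * g x 0 0 + (g x)⁻¹ 0 1 * g x 1 0 = 1 := by
    simpa using inv_mul_entry hx 0 0
  have eI01 : (g x)⁻¹ 0 0 * g x 0 1 + (g x)⁻¹ 0 1 * g x 1 1 = 0 := by
    simpa using inv_mul_entry hx 0 1
  have eI10 : (g x)⁻¹ 1 0 * g x 0 0 + (g x)⁻¹ 1 1 * g x 1 0 = 0 := by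
    simpa using inv_mul_entry hx 1 0
  have eI11 : (g x)⁻¹ 1 0 * g x 0 1 + (g x)⁻¹ 1 1 * g x 1 1 = 1 := by
    simpa using inv_mul_entry hx 1 1
  simp only [Fin.forall_fin_two, christoffel, Fin.sum_univ_two]
  refine ⟨⟨⟨?_, ?_⟩, ⟨?_, ?_⟩⟩, ⟨⟨?_, ?_⟩, ⟨?_, ?_⟩⟩⟩
  · linear_combination (norm := ring1) (-1) * ((1/2) * (pd 0 (fun y => g y 0 0) x + pd 0 (fun y => g y 0 0) x - pd 0 (fun y => g y 0 0) x)) * eI00 + (-1) * ((1/2) * (pd 0 (fun y => g y 0 0) x + pd 0 (fun y => g y 0 0) x - pd 0 (fun y => g y 0 0) x)) * eI00 + (-1) * ((1/2) * (pd 0 (fun y => g y 0 1) x + pd 0 (fun y => g y 0 1) x - pd 1 (fun y => g y 0 0) x)) * eI10 + (-1) * ((1/2) * (pd 0 (fun y => g y 0 1) x + pd 0 (fun y => g y 0 1) x - pd 1 (fun y => g y 0 0) x)) * eI10 + ((2) * (g x 0 0) * (pd 0 (fun y => g y 0 1) x)) * (eGis) + (((-1)) * (g x 0 0) * (pd 1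 (fun y => g y 0 0) x)) * (eGis) + (((-1/2)) * (g x 0 1) * (pd 0 (fun y => g y 0 0) x)) * (eGis) + (((g x)⁻¹ 0 1) * (pd 0 (fun y => g y 0 0) x)) * (hGs) + (((-1/2)) * ((g x)⁻¹ 1 0) * (pd 0 (fun y => g y 0 0) x)) * (hGs) + (((-1/2)) * (g x 0 1) * (pd 0 (fun y => g y 0 0) x)) * (eGis) + (((g x)⁻¹ 1 1) * (pd 0 (fun y => g y 0 1) x)) * (hGs) + (((-1/2)) * ((g x)⁻¹ 1 1) * (pd 1 (fun y => g y 0 0) x)) * (hGs)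
  · linear_combination (norm := ring1) (-1) * ((1/2) * (pd 0 (fun y => g y 0 0) x + pd 0 (fun y => g y 0 0) x - pd 0 (fun y => g y 0 0) x)) * eI01 + (-1) * ((1/2) * (pd 0 (fun y => g y 1 0) x + pd 1 (fun y => g y 0 0) x - pd 0 (fun y => g y 0 1) x)) * eI00 + (-1) * ((1/2) * (pd 0 (fun y => g y 0 1) x + pd 0 (fun y => g y 0 1) x - pd 1 (fun y => g y 0 0) x)) * eI11 + (-1) * ((1/2) * (pd 0 (fun y => g y 1 1) x + pd 1 (fun y => g y 0 1) x - pd 1 (fun y => g y 0 1) x)) * eI10 + (((1/2)) * (g x 0 0) * (pd 0 (fun y => g y 1 1) x)) * (eGis) + (((3/2)) * (g x 0 1) * (pd 0 (fun y => g y 0 1) x)) * (eGis) + (((-1/2)) * (g x 0 1) * (pd 0 (fun y => g y 1 0) x)) * (eGis) + (((-1/2)) * (g x 0 1) * ((g x)⁻¹ 0 1)) * (ePs 0) + (((-1)) * (g x 0 1) * (pd 1 (fun y => g y 0 0) x)) * (eGis) + (((-1/2)) * ((g x)⁻¹ 0 1) * (pd 0 (fun y => g y 0 1) x)) * (hGs)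 + (((1/2)) * ((g x)⁻¹ 0 1) * (pd 0 (fun y => g y 1 0) x)) * (hGs) + (((1/2)) * (g x 0 1) * ((g x)⁻¹ 0 1)) * (ePs 0) + (((1/2)) * ((g x)⁻¹ 0 1) * (pd 1 (fun y => g y 0 0) x)) * (hGs) + (((1/2)) * ((g x)⁻¹ 1 1) * (pd 0 (fun y => g y 1 1) x)) * (hGs) + (((-1/2)) * (g x 1 1) * (pd 0 (fun y => g y 0 0) x)) * (eGis) + (((-1/2))) * (ePs 0)
  · linear_combination (norm := ring1) (-1) * ((1/2) * (pd 0 (fun y => g y 1 0) x + pd 1 (fun y => g y 0 0) x - pd 0 (fun y => g y 0 1) x)) * eI00 + (-1) * ((1/2) * (pd 0 (fun y => g y 0 0) x + pd 0 (fun y => g y 0 0) x - pd 0 (fun y => g y 0 0) x)) * eI01 + (-1) * ((1/2) * (pd 0 (fun y => g y 1 1) x + pd 1 (fun y => g y 0 1) x - pd 1 (fun y => g y 0 1) x)) * eI10 + (-1) * ((1/2) * (pd 0 (fun y => g y 0 1) x + pd 0 (fun y => g y 0 1) x - pd 1 (fun y => g y 0 0) x)) * eI11 + (((1/2)) * (g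 x 0 0) * (pd 0 (fun y => g y 1 1) x)) * (eGis) + ((g x 0 1) * (pd 0 (fun y => g y 0 1) x)) * (eGis) + (((-1/2)) * (g x 0 1) * (pd 1 (fun y => g y 0 0) x)) * (eGis) + (((-1/2)) * ((g x)⁻¹ 0 0) * (pd 0 (fun y => g y 0 0) x)) * (hGs) + (((-3/2)) * ((g x)⁻¹ 0 1) * (pd 0 (fun y => g y 0 1) x)) * (hGs) + (((1/2)) * ((g x)⁻¹ 0 1) * (pd 0 (fun y => g y 1 0) x)) * (hGs) + (((1/2)) * (g x 0 1) * ((g x)⁻¹ 0 1)) * (ePs 0) + (((g x)⁻¹ 0 1) * (pd 1 (fun y => g y 0 0) x)) * (hGs) + (((1/2)) * ((g x)⁻¹ 1 0) * (pd 0 (fun y => g y 0 1) x)) * (hGs) + (((1/2)) * (g x 0 1) * (pd 0 (fun y => g y 0 1) x)) * (eGis) + (((-1/2)) * ((g x)⁻¹ 1 0) * (pd 0 (fun y => g y 1 0) x)) * (hGs) + (((-1/2)) * (g x 0 1) * (pd 0 (fun y => g y 1 0) x)) * (eGis) + (((-1/2)) * (g x 0 1) * ((g x)⁻¹ 0 1))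 * (ePs 0) + (((-1/2)) * ((g x)⁻¹ 1 0) * (pd 1 (fun y => g y 0 0) x)) * (hGs) + (((-1/2)) * (g x 0 1) * (pd 1 (fun y => g y 0 0) x)) * (eGis) + (((-1/2)) * (g x 1 1) * (pd 0 (fun y => g y 0 0) x)) * (eGis) + (((1/2))) * (ePs 0)
  · linear_combination (norm := ring1) (-1) * ((1/2) * (pd 0 (fun y => g y 1 0) x + pd 1 (fun y => g y 0 0) x - pd 0 (fun y => g y 0 1) x)) * eI01 + (-1) * ((1/2) * (pd 0 (fun y => g y 1 0) x + pd 1 (fun y => g y 0 0) x - pd 0 (fun y => g y 0 1) x)) * eI01 + (-1) * ((1/2) * (pd 0 (fun y => g y 1 1) x + pd 1 (fun y => g y 0 1) x - pd 1 (fun y => g y 0 1) x)) * eI11 + (-1) * ((1/2) * (pd 0 (fun y => g y 1 1) x + pd 1 (fun y => g y 0 1) x - pd 1 (fun y => g y 0 1) x)) * eI11 + (((1/2)) * (g x 0 1) * ((g x)⁻¹ 0 0)) * (ePs 0) + ((g x 0 1) * (pd 0 (fun y => g y 1 1) x)) * (eGis) + (((1/2)) * ((g x)⁻¹ 0 0)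 * (pd 0 (fun y => g y 0 1) x)) * (hGs) + (((-1/2)) * ((g x)⁻¹ 0 0) * (pd 0 (fun y => g y 1 0) x)) * (hGs) + (((-1/2)) * (g x 0 1) * ((g x)⁻¹ 0 0)) * (ePs 0) + (((-1/2)) * ((g x)⁻¹ 0 0) * (pd 1 (fun y => g y 0 0) x)) * (hGs) + (((-1/2)) * ((g x)⁻¹ 0 1) * (pd 0 (fun y => g y 1 1) x)) * (hGs) + ((g x 1 1) * ((g x)⁻¹ 0 1)) * (ePs 0) + ((g x 1 1) * (pd 0 (fun y => g y 0 1) x)) * (eGis) + (((-1)) * (g x 1 1) * (pd 0 (fun y => g y 1 0) x)) * (eGis) + (((-1)) * (g x 1 1) * ((g x)⁻¹ 0 1)) * (ePs 0) + (((-1)) * (g x 1 1) * (pd 1 (fun y => g y 0 0) x)) * (eGis)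
  · linear_combination (norm := ring1) (-1) * ((1/2) * (pd 1 (fun y => g y 0 0) x + pd 0 (fun y => g y 1 0) x - pd 0 (fun y => g y 1 0) x)) * eI00 + (-1) * ((1/2) * (pd 1 (fun y => g y 0 0) x + pd 0 (fun y => g y 1 0) x - pd 0 (fun y => g y 1 0) x)) * eI00 + (-1) * ((1/2) * (pd 1 (fun y => g y 0 1) x + pd 0 (fun y => g y 1 1) x - pd 1 (fun y => g y 1 0) x)) * eI10 + (-1) * ((1/2) * (pd 1 (fun y => g y 0 1) x + pd 0 (fun y => g y 1 1) x - pd 1 (fun y => g y 1 0) x)) * eI10 + ((g x 0 0) * ((g x)⁻¹ 0 1)) * (ePs 1) + ((g x 0 0) * (pd 0 (fun y => g y 1 1) x)) * (eGis) + ((g x 0 0) * (pd 1 (fun y => g y 0 1) x)) * (eGis) + (((-1)) * (g x 0 0) * (pd 1 (fun y => g y 1 0) x)) * (eGis) + (((-1)) * (g x 0 0) * ((g x)⁻¹ 0 1)) * (ePs 1) + (((-1/2)) * (g x 0 1) * (pd 1 (fun y => g y 0 0) x)) * (eGis) + (((1/2)) * (g x 0 1) * ((g x)⁻¹ 1 1))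 * (ePs 1) + (((g x)⁻¹ 0 1) * (pd 1 (fun y => g y 0 0) x)) * (hGs) + (((-1/2)) * ((g x)⁻¹ 1 0) * (pd 1 (fun y => g y 0 0) x)) * (hGs) + (((-1/2)) * (g x 0 1) * (pd 1 (fun y => g y 0 0) x)) * (eGis) + (((1/2)) * ((g x)⁻¹ 1 1) * (pd 0 (fun y => g y 1 1) x)) * (hGs) + (((1/2)) * ((g x)⁻¹ 1 1) * (pd 1 (fun y => g y 0 1) x)) * (hGs) + (((-1/2)) * ((g x)⁻¹ 1 1) * (pd 1 (fun y => g y 1 0) x)) * (hGs) + (((-1/2)) * (g x 0 1) * ((g x)⁻¹ 1 1)) * (ePs 1)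
  · linear_combination (norm := ring1) (-1) * ((1/2) * (pd 1 (fun y => g y 0 0) x + pd 0 (fun y => g y 1 0) x - pd 0 (fun y => g y 1 0) x)) * eI01 + (-1) * ((1/2) * (pd 1 (fun y => g y 1 0) x + pd 1 (fun y => g y 1 0) x - pd 0 (fun y => g y 1 1) x)) * eI00 + (-1) * ((1/2) * (pd 1 (fun y => g y 0 1) x + pd 0 (fun y => g y 1 1) x - pd 1 (fun y => g y 1 0) x)) * eI11 + (-1) * ((1/2) * (pd 1 (fun y => g y 1 1) x + pd 1 (fun y => g y 1 1) x - pd 1 (fun y => g y 1 1) x)) * eI10 + (((1/2)) * (g x 0 0) * (pd 1 (fun y => g y 1 1) x)) * (eGis) + (((1/2)) * (g x 0 1) * ((g x)⁻¹ 0 1)) * (ePs 1) + ((g x 0 1) * (pd 0 (fun y => g y 1 1) x)) * (eGis) + (((1/2)) * (g x 0 1) * (pd 1 (fun y => g y 0 1) x)) * (eGis) + (((-3/2)) * (g x 0 1) * (pd 1 (fun y => g y 1 0) x)) * (eGis) + (((-3/2)) * (g x 0 1) * ((g x)⁻¹ 0 1)) * (ePs 1) + (((-1/2)) * ((g x)⁻¹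 0 1) * (pd 0 (fun y => g y 1 1) x)) * (hGs) + (((g x)⁻¹ 0 1) * (pd 1 (fun y => g y 1 0) x)) * (hGs) + ((g x 0 1) * ((g x)⁻¹ 0 1)) * (ePs 1) + (((1/2)) * ((g x)⁻¹ 1 1) * (pd 1 (fun y => g y 1 1) x)) * (hGs) + (((-1/2)) * (g x 1 1) * (pd 1 (fun y => g y 0 0) x)) * (eGis) + (((-1/2))) * (ePs 1)
  · linear_combination (norm := ring1) (-1) * ((1/2) * (pd 1 (fun y => g y 1 0) x + pd 1 (fun y => g y 1 0) x - pd 0 (fun y => g y 1 1) x)) * eI00 + (-1) * ((1/2) * (pd 1 (fun y => g y 0 0) x + pd 0 (fun y => g y 1 0) x - pd 0 (fun y => g y 1 0) x)) * eI01 + (-1) * ((1/2) * (pd 1 (fun y => g y 1 1) x + pd 1 (fun y => g y 1 1) x - pd 1 (fun y => g y 1 1) x)) * eI10 + (-1) * ((1/2) * (pd 1 (fun y => g y 0 1) x + pd 0 (fun y => g y 1 1) x - pd 1 (fun y => g y 1 0) x)) * eI11 + (((1/2)) * (g x 0 0) * (pd 1 (fun y => g y 1 1) x)) * (eGis) + (((1/2))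 * (g x 0 1) * (pd 0 (fun y => g y 1 1) x)) * (eGis) + (((1/2)) * (g x 0 1) * (pd 1 (fun y => g y 0 1) x)) * (eGis) + (((-1/2)) * (g x 0 1) * (pd 1 (fun y => g y 1 0) x)) * (eGis) + (((-1/2)) * (g x 0 1) * ((g x)⁻¹ 0 1)) * (ePs 1) + (((-1/2)) * ((g x)⁻¹ 0 0) * (pd 1 (fun y => g y 0 0) x)) * (hGs) + (((-1)) * ((g x)⁻¹ 0 1) * (pd 0 (fun y => g y 1 1) x)) * (hGs) + (((-1/2)) * ((g x)⁻¹ 0 1) * (pd 1 (fun y => g y 0 1) x)) * (hGs) + (((3/2)) * ((g x)⁻¹ 0 1) * (pd 1 (fun y => g y 1 0) x)) * (hGs) + (((3/2)) * (g x 0 1) * ((g x)⁻¹ 0 1)) * (ePs 1) + (((1/2)) * ((g x)⁻¹ 1 0) * (pd 0 (fun y => g y 1 1) x)) * (hGs) + (((1/2)) * (g x 0 1) * (pd 0 (fun y => g y 1 1) x)) * (eGis) + (((-1)) * ((g x)⁻¹ 1 0) * (pd 1 (fun y => g y 1 0) x)) * (hGs) + (((-1)) * (g x 0 1) * (pd 1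 (fun y => g y 1 0) x)) * (eGis) + (((-1)) * (g x 0 1) * ((g x)⁻¹ 0 1)) * (ePs 1) + (((-1/2)) * (g x 1 1) * (pd 1 (fun y => g y 0 0) x)) * (eGis) + (((1/2))) * (ePs 1)
  · linear_combination (norm := ring1) (-1) * ((1/2) * (pd 1 (fun y => g y 1 0) x + pd 1 (fun y => g y 1 0) x - pd 0 (fun y => g y 1 1) x)) * eI01 + (-1) * ((1/2) * (pd 1 (fun y => g y 1 0) x + pd 1 (fun y => g y 1 0) x - pd 0 (fun y => g y 1 1) x)) * eI01 + (-1) * ((1/2) * (pd 1 (fun y => g y 1 1) x + pd 1 (fun y => g y 1 1) x - pd 1 (fun y => g y 1 1) x)) * eI11 + (-1) * ((1/2) * (pd 1 (fun y => g y 1 1) x + pd 1 (fun y => g y 1 1) x - pd 1 (fun y => g y 1 1) x)) * eI11 + ((g x 0 1) * ((g x)⁻¹ 0 0)) * (ePs 1) + ((g x 0 1) * (pd 1 (fun y => g y 1 1) x)) * (eGis) + (((1/2)) * ((g x)⁻¹ 0 0) * (pd 0 (fun y => g y 1 1) x)) * (hGs) + (((-1)) * ((g x)⁻¹ 0 0)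 * (pd 1 (fun y => g y 1 0) x)) * (hGs) + (((-1)) * (g x 0 1) * ((g x)⁻¹ 0 0)) * (ePs 1) + (((-1/2)) * ((g x)⁻¹ 0 1) * (pd 1 (fun y => g y 1 1) x)) * (hGs) + ((2) * (g x 1 1) * ((g x)⁻¹ 0 1)) * (ePs 1) + ((g x 1 1) * (pd 0 (fun y => g y 1 1) x)) * (eGis) + (((-2)) * (g x 1 1) * (pd 1 (fun y => g y 1 0) x)) * (eGis) + (((-2)) * (g x 1 1) * ((g x)⁻¹ 0 1)) * (ePs 1)

/-! ### smoothness helpers -/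

lemma contDiffAt_chr {g : (Fin 2 → ℝ) → Matrix (Fin 2) (Fin 2) ℝ}
    (hsm : ∀ i j, ContDiff ℝ (⊤ : ℕ∞) (fun x => g x i j)) (m : ℕ) {x : Fin 2 → ℝ}
    (hx : (g x).det ≠ 0) (k i j : Fin 2) :
    ContDiffAt ℝ (m : ℕ) (christoffel g k i j) x := by
  have h1 : christoffel g k i j = fun y =>
      (1/2) * ((g y)⁻¹ k 0 * (pd i (fun z => g z j 0) y + pd j (fun z => g z i 0) y
          - pd 0 (fun z => g z i j) y)
        + (g y)⁻¹ k 1 * (pd i (fun z => g z j 1) y + pd j (fun z => g z i 1) y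
          - pd 1 (fun z => g z i j) y)) := by
    funext y; simp only [christoffel, Fin.sum_univ_two]
  rw [h1]
  have cg : ∀ a b c : Fin 2, ContDiffAt ℝ (m:ℕ) (pd c (fun z => g z a b)) x := by
    intro a b c
    exact (contDiff_pd (m := m) ((hsm a b).of_le (by exact_mod_cast le_top))).contDiffAt
  exact contDiffAt_const.mul
    (((contDiffAt_inv_entry hsm m hx k 0).mul
        (((cg j 0 i).add (cg i 0 j)).sub (cg i j 0))).add
      ((contDiffAt_inv_entry hsm m hx k 1).mul
        (((cg j 1 i).add (cg i 1 j)).sub (cg i j 1))))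

lemma dChr {g : (Fin 2 → ℝ) → Matrix (Fin 2) (Fin 2) ℝ}
    (hsm : ∀ i j, ContDiff ℝ (⊤ : ℕ∞) (fun x => g x i j)) {x : Fin 2 → ℝ}
    (hx : (g x).det ≠ 0) (k i j : Fin 2) :
    DifferentiableAt ℝ (christoffel g k i j) x :=
  (contDiffAt_chr hsm 1 hx k i j).differentiableAt (by norm_num)

lemma dG {g : (Fin 2 → ℝ) → Matrix (Fin 2) (Fin 2) ℝ}
    (hsm : ∀ i j, ContDiff ℝ (⊤ : ℕ∞) (fun x => g x i j)) (x : Fin 2 → ℝ) (a b : Fin 2) :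
    DifferentiableAt ℝ (fun y => g y a b) x :=
  ((hsm a b).differentiable (by simp)).differentiableAt

lemma dPG {g : (Fin 2 → ℝ) → Matrix (Fin 2) (Fin 2) ℝ}
    (hsm : ∀ i j, ContDiff ℝ (⊤ : ℕ∞) (fun x => g x i j)) (x : Fin 2 → ℝ) (c a b : Fin 2) :
    DifferentiableAt ℝ (pd c (fun y => g y a b)) x :=
  (((contDiff_pd (m := 1) ((hsm a b).of_le (WithTop.coe_le_coe.mpr le_top)))).differentiable (by norm_num)).differentiableAt

/-! ### Identity A' : derivative of metric compatibility -/

lemma IdA' {g : (Fin 2 → ℝ) → Matrix (Fin 2) (Fin 2) ℝ}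
    (hsm : ∀ i j, ContDiff ℝ (⊤ : ℕ∞) (fun x => g x i j)) (hsym : ∀ x, (g x).IsSymm)
    {x : Fin 2 → ℝ} (hx : (g x).det ≠ 0) (s k i j : Fin 2) :
    pd s (pd k (fun y => g y i j)) x = (((christoffel g 0 k i x * pd s (fun y => g y 0 j) x + g x 0 j * pd s (christoffel g 0 k i) x) + (christoffel g 0 k j x * pd s (fun y => g y i 0) x + g x i 0 * pd s (christoffel g 0 k j) x)) + ((christoffel g 1 k i x * pd s (fun y => g y 1 j) x + g x 1 j * pd s (christoffel g 1 k i) x) + (christoffel g 1 k j x * pd s (fun y => g y i 1) x + g x i 1 * pd s (christoffel g 1 k j) x))) := by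
  have hmem : {y : Fin 2 → ℝ | (g y).det ≠ 0} ∈ nhds x := (openV hsm).mem_nhds hx
  have hfe : (fun y => pd k (fun z => g z i j) y) =ᶠ[nhds x]
      (fun y => (christoffel g 0 k i y * g y 0 j + christoffel g 0 k j y * g y i 0)
        + (christoffel g 1 k i y * g y 1 j + christoffel g 1 k j y * g y i 1)) := by
    filter_upwards [hmem] with y hy
    have h2 := IdA hsym hy k i j
    rw [Fin.sum_univ_two] at h2
    exact h2
  rw [pd_congr_nhds hfe,
    pd_mul_add4 (christoffel g 0 k i) (fun y => g y 0 j) (christoffel g 0 k j)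
      (fun y => g y i 0) (christoffel g 1 k i) (fun y => g y 1 j) (christoffel g 1 k j)
      (fun y => g y i 1)
      (dChr hsm hx 0 k i) (dG hsm x 0 j) (dChr hsm hx 0 k j) (dG hsm x i 0)
      (dChr hsm hx 1 k i) (dG hsm x 1 j) (dChr hsm hx 1 k j) (dG hsm x i 1)]

lemma pdLie {g : (Fin 2 → ℝ) → Matrix (Fin 2) (Fin 2) ℝ}
    {v : Fin 2 → (Fin 2 → ℝ) → ℝ}
    (hsm : ∀ i j, ContDiff ℝ (⊤ : ℕ∞) (fun x => g x i j)) (hv : SmoothVF v)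
    (x : Fin 2 → ℝ) (k i j : Fin 2) :
    pd k (lieMetric v g i j) x = (((v 0 x * pd k (pd 0 (fun z => g z i j)) x + pd 0 (fun z => g z i j) x * pd k (v 0) x) + (g x 0 j * pd k (pd i (v 0)) x + pd i (v 0) x * pd k (fun y => g y 0 j) x) + (g x i 0 * pd k (pd j (v 0)) x + pd j (v 0) x * pd k (fun y => g y i 0) x)) + ((v 1 x * pd k (pd 1 (fun z => g z i j)) x + pd 1 (fun z => g z i j) x * pd k (v 1) x) + (g x 1 j * pd k (pd i (v 1)) x + pd i (v 1) x * pd k (fun y => g y 1 j) x) + (g x i 1 * pd k (pd j (v 1)) x + pd j (v 1) x * pd k (fun y => g y i 1) x))) := by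
  have dv : ∀ l : Fin 2, DifferentiableAt ℝ (v l) x :=
    fun l => ((hv l).differentiable (by simp)).differentiableAt
  have dpv : ∀ (c l : Fin 2), DifferentiableAt ℝ (pd c (v l)) x := fun c l =>
    (((contDiff_pd (m := 1) ((hv l).of_le (WithTop.coe_le_coe.mpr le_top)))).differentiable (by norm_num)).differentiableAt
  have e1 : lieMetric v g i j = fun y =>
      (v 0 y * pd 0 (fun z => g z i j) y + g y 0 j * pd i (v 0) y + g y i 0 * pd j (v 0) y)
      + (v 1 y * pd 1 (fun z => g z i j) y + g y 1 j * pd i (v 1) y + g y i 1 * pd j (v 1) y) := by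
    funext y; simp only [lieMetric, Fin.sum_univ_two]
  rw [e1, pd_mul_add6 (v 0) (pd 0 (fun z => g z i j)) (fun y => g y 0 j) (pd i (v 0))
    (fun y => g y i 0) (pd j (v 0)) (v 1) (pd 1 (fun z => g z i j)) (fun y => g y 1 j)
    (pd i (v 1)) (fun y => g y i 1) (pd j (v 1))
    (dv 0) (dPG hsm x 0 i j) (dG hsm x 0 j) (dpv i 0) (dG hsm x i 0) (dpv j 0)
    (dv 1) (dPG hsm x 1 i j) (dG hsm x 1 j) (dpv i 1) (dG hsm x i 1) (dpv j 1)]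

/-! ### Identity B : ∇ₖ(L_v g) in terms of L_v Γ -/

lemma IdB {g : (Fin 2 → ℝ) → Matrix (Fin 2) (Fin 2) ℝ} {v : Fin 2 → (Fin 2 → ℝ) → ℝ}
    (hsm : ∀ i j, ContDiff ℝ (⊤ : ℕ∞) (fun x => g x i j)) (hsym : ∀ x, (g x).IsSymm)
    (hv : SmoothVF v) {x : Fin 2 → ℝ} (hx : (g x).det ≠ 0) :
    ∀ k i j : Fin 2, pd k (lieMetric v g i j) x
      = ∑ l, (christoffel g l k i x * lieMetric v g l j x
          + christoffel g l k j x * lieMetric v g i l x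
          + g x l j * lieConn v (christoffel g) l k i x
          + g x i l * lieConn v (christoffel g) l k j x) := by
  have hGs : g x 1 0 = g x 0 1 := (hsym x).apply 0 1
  have gfs : (fun y => g y (1:Fin 2) (0:Fin 2)) = fun y => g y 0 1 :=
    funext fun y => (hsym y).apply 0 1
  have ePs : ∀ k : Fin 2, pd k (fun y => g y 1 0) x = pd k (fun y => g y 0 1) x :=
    fun k => by rw [gfs]
  have chrf : ∀ k : Fin 2, christoffel g k 1 0 = christoffel g k 0 1 := by
    intro k; funext y; simp only [christoffel, Fin.sum_univ_two, gfs]; ring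
  have eGas : ∀ k : Fin 2, christoffel g k 1 0 x = christoffel g k 0 1 x :=
    fun k => by rw [chrf k]
  have eDGs : ∀ s k : Fin 2, pd s (christoffel g k 1 0) x = pd s (christoffel g k 0 1) x :=
    fun s k => by rw [chrf k]
  have eW2s : ∀ c : Fin 2, pd 1 (pd 0 (v c)) x = pd 0 (pd 1 (v c)) x :=
    fun c => pd_comm ((hv c).contDiffAt.of_le (WithTop.coe_le_coe.mpr le_top))
  have eH : ∀ a b : Fin 2, lieMetric v g a b x =
      (v 0 x * pd 0 (fun y => g y a b) x + g x 0 b * pd a (v 0) x + g x a 0 * pd b (v 0) x)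
      + (v 1 x * pd 1 (fun y => g y a b) x + g x 1 b * pd a (v 1) x + g x a 1 * pd b (v 1) x) := by
    intro a b; simp only [lieMetric, Fin.sum_univ_two]
  have eC : ∀ c a b : Fin 2, lieConn v (christoffel g) c a b x =
      pd a (fun y => pd b (v c) y) x
      + ((v 0 x * pd 0 (christoffel g c a b) x + christoffel g c 0 b x * pd a (v 0) x
          + christoffel g c a 0 x * pd b (v 0) x - christoffel g 0 a b x * pd 0 (v c) x)
        + (v 1 x * pd 1 (christoffel g c a b) x + christoffel g c 1 b x * pd a (v 1) x
          + christoffel g c a 1 x * pd b (v 1) x - christoffel g 1 a b x * pd 1 (v c) x)) := by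
    intro c a b; simp only [lieConn, Fin.sum_univ_two]
  have eP := pdLie hsm hv x
  have eAx : ∀ k i j : Fin 2, pd k (fun y => g y i j) x
      = (christoffel g 0 k i x * g x 0 j + christoffel g 0 k j x * g x i 0)
        + (christoffel g 1 k i x * g x 1 j + christoffel g 1 k j x * g x i 1) := by
    intro k i j
    have h2 := IdA hsym hx k i j
    rwa [Fin.sum_univ_two] at h2
  have eA' := IdA' hsm hsym hx
  have eRl : ∀ i j : Fin 2, (((christoffel g 0 1 i x * pd 0 (fun y => g y 0 j) x + g x 0 j * pd 0 (christoffel g 0 1 i) x) + (christoffel g 0 1 j x * pd 0 (fun y => g y i 0) x + g x i 0 * pd 0 (christoffel g 0 1 j) x)) + ((christoffel g 1 1 i x * pd 0 (fun y => g y 1 j) x + g x 1 j * pd 0 (christoffel g 1 1 i) x) + (christoffel g 1 1 j x * pd 0 (fun y => g y i 1) x + g x i 1 * pd 0 (christoffel g 1 1 j) x))) = (((christoffel g 0 0 i x * pd 1 (fun y => g y 0 j) x + g x 0 j * pd 1 (christoffel g 0 0 i) x) + (christoffel g 0 0 j x * pd 1 (fun y => g y i 0) x + g x i 0 * pd 1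 (christoffel g 0 0 j) x)) + ((christoffel g 1 0 i x * pd 1 (fun y => g y 1 j) x + g x 1 j * pd 1 (christoffel g 1 0 i) x) + (christoffel g 1 0 j x * pd 1 (fun y => g y i 1) x + g x i 1 * pd 1 (christoffel g 1 0 j) x))) := by
    intro i j
    rw [← eA' 0 1 i j, ← eA' 1 0 i j]
    exact pd_comm ((hsm i j).contDiffAt.of_le (WithTop.coe_le_coe.mpr le_top))
  simp only [Fin.forall_fin_two, Fin.sum_univ_two]
  refine ⟨⟨⟨?_, ?_⟩, ⟨?_, ?_⟩⟩, ⟨⟨?_, ?_⟩, ⟨?_, ?_⟩⟩⟩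
  · linear_combination (norm := ring1) ((1) * (v 1 x)) * (eRl 0 0) + (((-2)) * (christoffel g 0 0 0 x)) * (eH 0 0) + (((-2)) * (christoffel g 0 0 0 x) * (pd 0 (v 1) x)) * (hGs) + (((-2)) * (christoffel g 0 0 0 x) * (v 0 x)) * (eAx 0 0 0) + (((-2)) * (christoffel g 0 0 0 x) * (christoffel g 1 0 0 x) * (v 0 x)) * (hGs) + (((-2)) * (christoffel g 0 0 0 x) * (v 1 x)) * (eAx 1 0 0) + (((-4)) * (christoffel g 0 0 0 x) * (g x 0 0) * (v 1 x)) * (eGas 0) + (((-2)) * (christoffel g 0 0 0 x) * (g x 0 1) * (v 1 x)) * (eGas 1) + (((-2)) * (christoffel g 0 0 0 x) * (g x 1 0) * (v 1 x)) * (eGas 1) + (((-2)) * (christoffel g 0 0 0 x) * (christoffel g 1 0 1 x) * (v 1 x)) * (hGs) + (((-1)) * (christoffel g 1 0 0 x)) * (eH 0 1) + (((-1)) * (christoffel g 1 0 0 x)) * (eH 1 0) + (((-1)) * (christoffel g 1 0 0 x) * (pd 0 (v 0) x)) * (hGs) + (((-1)) * (christoffel g 1 0 0 x) * (pd 1 (v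 1) x)) * (hGs) + (((-1)) * (christoffel g 1 0 0 x) * (v 0 x)) * (eAx 0 0 1) + (((-1)) * (christoffel g 1 0 0 x) * (v 0 x)) * (ePs 0) + (((-1)) * (christoffel g 1 0 0 x) * (v 0 x)) * (eAx 0 0 1) + (((-1)) * (christoffel g 1 0 0 x) * (v 1 x)) * (eAx 1 0 1) + (((-1)) * (christoffel g 1 0 0 x) * (g x 0 1) * (v 1 x)) * (eGas 0) + (((-1)) * (christoffel g 1 0 0 x) * (g x 1 1) * (v 1 x)) * (eGas 1) + (((-1)) * (christoffel g 1 0 0 x) * (v 1 x)) * (ePs 1) + (((-1)) * (christoffel g 1 0 0 x) * (v 1 x)) * (eAx 1 0 1) + (((-1)) * (christoffel g 1 0 0 x) * (g x 0 1) * (v 1 x)) * (eGas 0) + (((-1)) * (christoffel g 1 0 0 x) * (g x 1 1) * (v 1 x)) * (eGas 1) + ((1)) * (eP 0 0 0) + (((-2)) * (g x 0 0)) * (eC 0 0 0) + (((-2)) * (g x 0 0) * (pd 0 (v 1) x)) * (eGas 0) + (((-1)) * (g x 0 1)) * (eC 1 0 0) + (((-1)) * (g x 0 1) * (pd 0 (v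 1) x)) * (eGas 1) + (((-1)) * (lieConn v (christoffel g) 1 0 0 x)) * (hGs) + (((-1)) * (g x 0 1)) * (eC 1 0 0) + (((-1)) * (g x 0 1) * (pd 0 (v 1) x)) * (eGas 1) + ((pd 0 (pd 0 (v 1)) x)) * (hGs) + ((3) * (pd 0 (v 0) x)) * (eAx 0 0 0) + ((3) * (christoffel g 1 0 0 x) * (pd 0 (v 0) x)) * (hGs) + ((pd 0 (v 1) x)) * (eAx 0 0 1) + ((pd 0 (v 1) x)) * (ePs 0) + ((pd 0 (v 1) x)) * (eAx 0 0 1) + ((pd 0 (v 1) x)) * (eAx 1 0 0) + ((2) * (g x 0 0) * (pd 0 (v 1) x)) * (eGas 0) + ((g x 0 1) * (pd 0 (v 1) x)) * (eGas 1) + ((g x 1 0) * (pd 0 (v 1) x)) * (eGas 1) + ((christoffel g 1 0 1 x) * (pd 0 (v 1) x)) * (hGs) + ((v 0 x)) * (eA' 0 0 0 0) + ((2) * (christoffel g 0 0 0 x) * (v 0 x)) * (eAx 0 0 0) + ((2) * (christoffel g 0 0 0 x) * (christoffel g 1 0 0 x) * (v 0 x)) * (hGs) + ((christoffel g 1 0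 0 x) * (v 0 x)) * (eAx 0 0 1) + ((christoffel g 1 0 0 x) * (v 0 x)) * (ePs 0) + ((christoffel g 1 0 0 x) * (v 0 x)) * (eAx 0 0 1) + ((pd 0 (christoffel g 1 0 0) x) * (v 0 x)) * (hGs) + ((v 1 x)) * (eA' 0 1 0 0) + ((2) * (pd 0 (fun y => g y 0 0) x) * (v 1 x)) * (eGas 0) + ((2) * (christoffel g 0 0 1 x) * (v 1 x)) * (eAx 0 0 0) + ((2) * (christoffel g 0 0 1 x) * (christoffel g 1 0 0 x) * (v 1 x)) * (hGs) + ((pd 0 (fun y => g y 0 1) x) * (v 1 x)) * (eGas 1) + ((christoffel g 1 0 1 x) * (v 1 x)) * (eAx 0 0 1) + ((pd 0 (fun y => g y 1 0) x) * (v 1 x)) * (eGas 1) + ((christoffel g 1 0 1 x) * (v 1 x)) * (ePs 0) + ((christoffel g 1 0 1 x) * (v 1 x)) * (eAx 0 0 1) + ((2) * (g x 0 0) * (v 1 x)) * (eDGs 0 0) + ((g x 0 1) * (v 1 x)) * (eDGs 0 1) + ((g x 1 0) * (v 1 x)) * (eDGs 0 1) + ((pd 0 (christoffel g 1 0 1)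 x) * (v 1 x)) * (hGs) + ((2) * (christoffel g 0 0 0 x) * (v 1 x)) * (eAx 1 0 0) + ((4) * (christoffel g 0 0 0 x) * (g x 0 0) * (v 1 x)) * (eGas 0) + ((2) * (christoffel g 0 0 0 x) * (g x 0 1) * (v 1 x)) * (eGas 1) + ((2) * (christoffel g 0 0 0 x) * (g x 1 0) * (v 1 x)) * (eGas 1) + ((2) * (christoffel g 0 0 0 x) * (christoffel g 1 0 1 x) * (v 1 x)) * (hGs) + (((-2)) * (pd 0 (fun y => g y 0 0) x) * (v 1 x)) * (eGas 0) + (((-2)) * (christoffel g 0 0 1 x) * (v 1 x)) * (eAx 0 0 0) + (((-2)) * (christoffel g 0 0 1 x) * (christoffel g 1 0 0 x) * (v 1 x)) * (hGs) + ((christoffel g 1 0 0 x) * (v 1 x)) * (eAx 1 0 1) + ((christoffel g 1 0 0 x) * (g x 0 1) * (v 1 x)) * (eGas 0) + ((christoffel g 1 0 0 x) * (g x 1 1) * (v 1 x)) * (eGas 1) + ((christoffel g 1 0 0 x) * (v 1 x)) * (ePs 1) + ((christoffel g 1 0 0 x) * (v 1 x)) * (eAx 1 0 1) + ((christoffel g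 1 0 0 x) * (g x 0 1) * (v 1 x)) * (eGas 0) + ((christoffel g 1 0 0 x) * (g x 1 1) * (v 1 x)) * (eGas 1) + (((-1)) * (pd 0 (fun y => g y 0 1) x) * (v 1 x)) * (eGas 1) + (((-1)) * (christoffel g 1 0 1 x) * (v 1 x)) * (eAx 0 0 1) + (((-1)) * (pd 0 (fun y => g y 1 0) x) * (v 1 x)) * (eGas 1) + (((-1)) * (christoffel g 1 0 1 x) * (v 1 x)) * (ePs 0) + (((-1)) * (christoffel g 1 0 1 x) * (v 1 x)) * (eAx 0 0 1) + (((-2)) * (g x 0 0) * (v 1 x)) * (eDGs 0 0) + (((-1)) * (g x 0 1) * (v 1 x)) * (eDGs 0 1) + (((-1)) * (g x 1 0) * (v 1 x)) * (eDGs 0 1) + (((-1)) * (pd 0 (christoffel g 1 0 1) x) * (v 1 x)) * (hGs) + ((pd 1 (christoffel g 1 0 0) x) * (v 1 x)) * (hGs)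
  · linear_combination (norm := ring1) ((1) * (v 1 x)) * (eRl 0 1) + (((-1)) * (christoffel g 0 0 0 x)) * (eH 0 1) + (((-1)) * (christoffel g 0 0 0 x) * (v 0 x)) * (eAx 0 0 1) + (((-1)) * (christoffel g 0 0 0 x) * (v 1 x)) * (eAx 1 0 1) + (((-1)) * (christoffel g 0 0 0 x) * (g x 0 1) * (v 1 x)) * (eGas 0) + (((-1)) * (christoffel g 0 0 0 x) * (g x 1 1) * (v 1 x)) * (eGas 1) + (((-1)) * (christoffel g 0 0 1 x)) * (eH 0 0) + (((-1)) * (christoffel g 0 0 1 x) * (pd 0 (v 1) x)) * (hGs) + (((-1)) * (christoffel g 0 0 1 x) * (v 0 x)) * (eAx 0 0 0) + (((-1)) * (christoffel g 0 0 1 x) * (christoffel g 1 0 0 x) * (v 0 x)) * (hGs) + (((-1)) * (christoffel g 0 0 1 x) * (v 1 x)) * (eAx 1 0 0) + (((-2)) * (christoffel g 0 0 1 x) * (g x 0 0) * (v 1 x)) * (eGas 0) + (((-1)) * (christoffel g 0 0 1 x) * (g x 0 1) * (v 1 x)) * (eGas 1) + (((-1)) * (christoffel g 0 0 1 x) * (g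 x 1 0) * (v 1 x)) * (eGas 1) + (((-1)) * (christoffel g 0 0 1 x) * (christoffel g 1 0 1 x) * (v 1 x)) * (hGs) + (((-1)) * (christoffel g 1 0 0 x)) * (eH 1 1) + (((-1)) * (christoffel g 1 0 0 x) * (pd 1 (v 0) x)) * (hGs) + (((-1)) * (christoffel g 1 0 0 x) * (v 0 x)) * (eAx 0 1 1) + (((-1)) * (christoffel g 0 0 1 x) * (christoffel g 1 0 0 x) * (v 0 x)) * (hGs) + (((-1)) * (christoffel g 1 0 0 x) * (v 1 x)) * (eAx 1 1 1) + (((-1)) * (christoffel g 0 1 1 x) * (christoffel g 1 0 0 x) * (v 1 x)) * (hGs) + (((-1)) * (christoffel g 1 0 1 x)) * (eH 0 1) + (((-1)) * (christoffel g 1 0 1 x) * (v 0 x)) * (eAx 0 0 1) + (((-1)) * (christoffel g 1 0 1 x) * (v 1 x)) * (eAx 1 0 1) + (((-1)) * (christoffel g 1 0 1 x) * (g x 0 1) * (v 1 x)) * (eGas 0) + (((-1)) * (christoffel g 1 0 1 x) * (g x 1 1) * (v 1 x)) * (eGas 1) + ((1)) * (eP 0 0 1) + (((-1)) * (g x 0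 0)) * (eC 0 0 1) + (((-1)) * (g x 0 1)) * (eC 0 0 0) + (((-1)) * (g x 0 1) * (pd 0 (v 1) x)) * (eGas 0) + (((-1)) * (g x 0 1)) * (eC 1 0 1) + (((-1)) * (g x 1 1)) * (eC 1 0 0) + (((-1)) * (g x 1 1) * (pd 0 (v 1) x)) * (eGas 1) + ((pd 1 (v 0) x)) * (eAx 0 0 0) + ((christoffel g 1 0 0 x) * (pd 1 (v 0) x)) * (hGs) + ((2) * (pd 0 (v 0) x)) * (eAx 0 0 1) + ((pd 1 (v 1) x)) * (eAx 0 0 1) + ((pd 0 (v 1) x)) * (eAx 0 1 1) + ((christoffel g 0 0 1 x) * (pd 0 (v 1) x)) * (hGs) + ((pd 0 (v 1) x)) * (eAx 1 0 1) + ((g x 0 1) * (pd 0 (v 1) x)) * (eGas 0) + ((g x 1 1) * (pd 0 (v 1) x)) * (eGas 1) + ((v 0 x)) * (eA' 0 0 0 1) + ((christoffel g 0 0 0 x) * (v 0 x)) * (eAx 0 0 1) + ((christoffel g 0 0 1 x) * (v 0 x)) * (eAx 0 0 0) + ((christoffel g 0 0 1 x) * (christoffel g 1 0 0 x) * (v 0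 x)) * (hGs) + ((christoffel g 1 0 0 x) * (v 0 x)) * (eAx 0 1 1) + ((christoffel g 0 0 1 x) * (christoffel g 1 0 0 x) * (v 0 x)) * (hGs) + ((christoffel g 1 0 1 x) * (v 0 x)) * (eAx 0 0 1) + ((v 1 x)) * (eA' 0 1 0 1) + ((pd 0 (fun y => g y 0 1) x) * (v 1 x)) * (eGas 0) + ((christoffel g 0 0 1 x) * (v 1 x)) * (eAx 0 0 1) + ((christoffel g 0 1 1 x) * (v 1 x)) * (eAx 0 0 0) + ((christoffel g 0 1 1 x) * (christoffel g 1 0 0 x) * (v 1 x)) * (hGs) + ((pd 0 (fun y => g y 1 1) x) * (v 1 x)) * (eGas 1) + ((christoffel g 1 0 1 x) * (v 1 x)) * (eAx 0 1 1) + ((christoffel g 0 0 1 x) * (christoffel g 1 0 1 x) * (v 1 x)) * (hGs) + ((christoffel g 1 1 1 x) * (v 1 x)) * (eAx 0 0 1) + ((g x 0 1) * (v 1 x)) * (eDGs 0 0) + ((g x 1 1) * (v 1 x)) * (eDGs 0 1) + ((christoffel g 0 0 0 x) * (v 1 x)) * (eAx 1 0 1) + ((christoffel g 0 0 0 x) *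 (g x 0 1) * (v 1 x)) * (eGas 0) + ((christoffel g 0 0 0 x) * (g x 1 1) * (v 1 x)) * (eGas 1) + ((christoffel g 0 0 1 x) * (v 1 x)) * (eAx 1 0 0) + ((2) * (christoffel g 0 0 1 x) * (g x 0 0) * (v 1 x)) * (eGas 0) + ((christoffel g 0 0 1 x) * (g x 0 1) * (v 1 x)) * (eGas 1) + ((christoffel g 0 0 1 x) * (g x 1 0) * (v 1 x)) * (eGas 1) + ((christoffel g 0 0 1 x) * (christoffel g 1 0 1 x) * (v 1 x)) * (hGs) + (((-1)) * (pd 0 (fun y => g y 0 1) x) * (v 1 x)) * (eGas 0) + (((-1)) * (christoffel g 0 0 1 x) * (v 1 x)) * (eAx 0 0 1) + (((-1)) * (christoffel g 0 1 1 x) * (v 1 x)) * (eAx 0 0 0) + (((-1)) * (christoffel g 0 1 1 x) * (christoffel g 1 0 0 x) * (v 1 x)) * (hGs) + ((christoffel g 1 0 0 x) * (v 1 x)) * (eAx 1 1 1) + ((christoffel g 0 1 1 x) * (christoffel g 1 0 0 x) * (v 1 x)) * (hGs) + ((christoffel g 1 0 1 x) * (v 1 x)) * (eAx 1 0 1) +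 ((christoffel g 1 0 1 x) * (g x 0 1) * (v 1 x)) * (eGas 0) + ((christoffel g 1 0 1 x) * (g x 1 1) * (v 1 x)) * (eGas 1) + (((-1)) * (pd 0 (fun y => g y 1 1) x) * (v 1 x)) * (eGas 1) + (((-1)) * (christoffel g 1 0 1 x) * (v 1 x)) * (eAx 0 1 1) + (((-1)) * (christoffel g 0 0 1 x) * (christoffel g 1 0 1 x) * (v 1 x)) * (hGs) + (((-1)) * (christoffel g 1 1 1 x) * (v 1 x)) * (eAx 0 0 1) + (((-1)) * (g x 0 1) * (v 1 x)) * (eDGs 0 0) + (((-1)) * (g x 1 1) * (v 1 x)) * (eDGs 0 1)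
  · linear_combination (norm := ring1) ((1) * (v 1 x)) * (eRl 0 1) + (((-1)) * (christoffel g 0 0 0 x)) * (eH 1 0) + (((-1)) * (christoffel g 0 0 0 x) * (pd 0 (v 0) x)) * (hGs) + (((-1)) * (christoffel g 0 0 0 x) * (pd 1 (v 1) x)) * (hGs) + (((-1)) * (christoffel g 0 0 0 x) * (v 0 x)) * (ePs 0) + (((-1)) * (christoffel g 0 0 0 x) * (v 0 x)) * (eAx 0 0 1) + (((-1)) * (christoffel g 0 0 0 x) * (v 1 x)) * (ePs 1) + (((-1)) * (christoffel g 0 0 0 x) * (v 1 x)) * (eAx 1 0 1) + (((-1)) * (christoffel g 0 0 0 x) * (g x 0 1) * (v 1 x)) * (eGas 0) + (((-1)) * (christoffel g 0 0 0 x) * (g x 1 1) * (v 1 x)) * (eGas 1) + (((-1)) * (christoffel g 0 0 1 x)) * (eH 0 0) + (((-1)) * (christoffel g 0 0 1 x) * (pd 0 (v 1) x)) * (hGs) + (((-1)) * (christoffel g 0 0 1 x) * (v 0 x)) * (eAx 0 0 0) + (((-1)) * (christoffel g 0 0 1 x) * (christoffel g 1 0 0 x) * (v 0 x)) * (hGs)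 + (((-1)) * (christoffel g 0 0 1 x) * (v 1 x)) * (eAx 1 0 0) + (((-2)) * (christoffel g 0 0 1 x) * (g x 0 0) * (v 1 x)) * (eGas 0) + (((-1)) * (christoffel g 0 0 1 x) * (g x 0 1) * (v 1 x)) * (eGas 1) + (((-1)) * (christoffel g 0 0 1 x) * (g x 1 0) * (v 1 x)) * (eGas 1) + (((-1)) * (christoffel g 0 0 1 x) * (christoffel g 1 0 1 x) * (v 1 x)) * (hGs) + (((-1)) * (christoffel g 1 0 0 x)) * (eH 1 1) + (((-1)) * (christoffel g 1 0 0 x) * (pd 1 (v 0) x)) * (hGs) + (((-1)) * (christoffel g 1 0 0 x) * (v 0 x)) * (eAx 0 1 1) + (((-1)) * (christoffel g 0 0 1 x) * (christoffel g 1 0 0 x) * (v 0 x)) * (hGs) + (((-1)) * (christoffel g 1 0 0 x) * (v 1 x)) * (eAx 1 1 1) + (((-1)) * (christoffel g 0 1 1 x) * (christoffel g 1 0 0 x) * (v 1 x)) * (hGs) + (((-1)) * (christoffel g 1 0 1 x)) * (eH 1 0) + (((-1)) * (christoffel g 1 0 1 x) * (pd 0 (v 0) x)) * (hGs) + (((-1))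 * (christoffel g 1 0 1 x) * (pd 1 (v 1) x)) * (hGs) + (((-1)) * (christoffel g 1 0 1 x) * (v 0 x)) * (ePs 0) + (((-1)) * (christoffel g 1 0 1 x) * (v 0 x)) * (eAx 0 0 1) + (((-1)) * (christoffel g 1 0 1 x) * (v 1 x)) * (ePs 1) + (((-1)) * (christoffel g 1 0 1 x) * (v 1 x)) * (eAx 1 0 1) + (((-1)) * (christoffel g 1 0 1 x) * (g x 0 1) * (v 1 x)) * (eGas 0) + (((-1)) * (christoffel g 1 0 1 x) * (g x 1 1) * (v 1 x)) * (eGas 1) + ((1)) * (eP 0 1 0) + (((-1)) * (g x 0 0)) * (eC 0 0 1) + (((-1)) * (lieConn v (christoffel g) 0 0 0 x)) * (hGs) + (((-1)) * (g x 0 1)) * (eC 0 0 0) + (((-1)) * (g x 0 1) * (pd 0 (v 1) x)) * (eGas 0) + (((-1)) * (lieConn v (christoffel g) 1 0 1 x)) * (hGs) + (((-1)) * (g x 0 1)) * (eC 1 0 1) + ((pd 0 (pd 0 (v 0)) x)) * (hGs) + ((pd 0 (pd 1 (v 1)) x)) * (hGs) + (((-1)) * (g x 1 1)) * (eC 1 0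 0) + (((-1)) * (g x 1 1) * (pd 0 (v 1) x)) * (eGas 1) + ((pd 1 (v 0) x)) * (eAx 0 0 0) + ((christoffel g 1 0 0 x) * (pd 1 (v 0) x)) * (hGs) + ((2) * (pd 0 (v 0) x)) * (ePs 0) + ((2) * (pd 0 (v 0) x)) * (eAx 0 0 1) + ((pd 1 (v 1) x)) * (ePs 0) + ((pd 1 (v 1) x)) * (eAx 0 0 1) + ((pd 0 (v 1) x)) * (eAx 0 1 1) + ((christoffel g 0 0 1 x) * (pd 0 (v 1) x)) * (hGs) + ((pd 0 (v 1) x)) * (ePs 1) + ((pd 0 (v 1) x)) * (eAx 1 0 1) + ((g x 0 1) * (pd 0 (v 1) x)) * (eGas 0) + ((g x 1 1) * (pd 0 (v 1) x)) * (eGas 1) + ((v 0 x)) * (eA' 0 0 1 0) + ((christoffel g 0 0 0 x) * (v 0 x)) * (ePs 0) + ((christoffel g 0 0 0 x) * (v 0 x)) * (eAx 0 0 1) + ((christoffel g 0 0 1 x) * (v 0 x)) * (eAx 0 0 0) + ((christoffel g 0 0 1 x) * (christoffel g 1 0 0 x) * (v 0 x)) * (hGs) + ((christoffel g 1 0 0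 x) * (v 0 x)) * (eAx 0 1 1) + ((christoffel g 0 0 1 x) * (christoffel g 1 0 0 x) * (v 0 x)) * (hGs) + ((christoffel g 1 0 1 x) * (v 0 x)) * (ePs 0) + ((christoffel g 1 0 1 x) * (v 0 x)) * (eAx 0 0 1) + ((pd 0 (christoffel g 0 0 0) x) * (v 0 x)) * (hGs) + ((pd 0 (christoffel g 1 0 1) x) * (v 0 x)) * (hGs) + ((v 1 x)) * (eA' 0 1 1 0) + ((pd 0 (fun y => g y 1 0) x) * (v 1 x)) * (eGas 0) + ((christoffel g 0 0 1 x) * (v 1 x)) * (ePs 0) + ((christoffel g 0 0 1 x) * (v 1 x)) * (eAx 0 0 1) + ((christoffel g 0 1 1 x) * (v 1 x)) * (eAx 0 0 0) + ((christoffel g 0 1 1 x) * (christoffel g 1 0 0 x) * (v 1 x)) * (hGs) + ((pd 0 (fun y => g y 1 1) x) * (v 1 x)) * (eGas 1) + ((christoffel g 1 0 1 x) * (v 1 x)) * (eAx 0 1 1) + ((christoffel g 0 0 1 x) * (christoffel g 1 0 1 x) * (v 1 x)) * (hGs) + ((christoffel g 1 1 1 x) * (v 1 x)) * (ePs 0)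 + ((christoffel g 1 1 1 x) * (v 1 x)) * (eAx 0 0 1) + ((g x 1 0) * (v 1 x)) * (eDGs 0 0) + ((pd 0 (christoffel g 0 0 1) x) * (v 1 x)) * (hGs) + ((g x 1 1) * (v 1 x)) * (eDGs 0 1) + ((pd 0 (christoffel g 1 1 1) x) * (v 1 x)) * (hGs) + ((christoffel g 0 0 0 x) * (v 1 x)) * (eAx 1 0 1) + ((christoffel g 0 0 0 x) * (g x 0 1) * (v 1 x)) * (eGas 0) + ((christoffel g 0 0 0 x) * (g x 1 1) * (v 1 x)) * (eGas 1) + ((christoffel g 0 0 1 x) * (v 1 x)) * (eAx 1 0 0) + ((2) * (christoffel g 0 0 1 x) * (g x 0 0) * (v 1 x)) * (eGas 0) + ((christoffel g 0 0 1 x) * (g x 0 1) * (v 1 x)) * (eGas 1) + ((christoffel g 0 0 1 x) * (g x 1 0) * (v 1 x)) * (eGas 1) + ((christoffel g 0 0 1 x) * (christoffel g 1 0 1 x) * (v 1 x)) * (hGs) + (((-1)) * (pd 0 (fun y => g y 0 1) x) * (v 1 x)) * (eGas 0) + (((-1)) * (christoffel g 0 0 1 x) * (v 1 x)) * (eAx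 0 0 1) + (((-1)) * (christoffel g 0 1 1 x) * (v 1 x)) * (eAx 0 0 0) + (((-1)) * (christoffel g 0 1 1 x) * (christoffel g 1 0 0 x) * (v 1 x)) * (hGs) + ((christoffel g 1 0 0 x) * (v 1 x)) * (eAx 1 1 1) + ((christoffel g 0 1 1 x) * (christoffel g 1 0 0 x) * (v 1 x)) * (hGs) + ((christoffel g 1 0 1 x) * (v 1 x)) * (eAx 1 0 1) + ((christoffel g 1 0 1 x) * (g x 0 1) * (v 1 x)) * (eGas 0) + ((christoffel g 1 0 1 x) * (g x 1 1) * (v 1 x)) * (eGas 1) + (((-1)) * (pd 0 (fun y => g y 1 1) x) * (v 1 x)) * (eGas 1) + (((-1)) * (christoffel g 1 0 1 x) * (v 1 x)) * (eAx 0 1 1) + (((-1)) * (christoffel g 0 0 1 x) * (christoffel g 1 0 1 x) * (v 1 x)) * (hGs) + (((-1)) * (christoffel g 1 1 1 x) * (v 1 x)) * (eAx 0 0 1) + (((-1)) * (g x 0 1) * (v 1 x)) * (eDGs 0 0) + (((-1)) * (g x 1 1) * (v 1 x)) * (eDGs 0 1)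
  · linear_combination (norm := ring1) ((1) * (v 1 x)) * (eRl 1 1) + (((-1)) * (christoffel g 0 0 1 x)) * (eH 0 1) + (((-1)) * (christoffel g 0 0 1 x)) * (eH 1 0) + (((-1)) * (christoffel g 0 0 1 x) * (pd 0 (v 0) x)) * (hGs) + (((-1)) * (christoffel g 0 0 1 x) * (pd 1 (v 1) x)) * (hGs) + (((-1)) * (christoffel g 0 0 1 x) * (v 0 x)) * (eAx 0 0 1) + (((-1)) * (christoffel g 0 0 1 x) * (v 0 x)) * (ePs 0) + (((-1)) * (christoffel g 0 0 1 x) * (v 0 x)) * (eAx 0 0 1) + (((-1)) * (christoffel g 0 0 1 x) * (v 1 x)) * (eAx 1 0 1) + (((-1)) * (christoffel g 0 0 1 x) * (g x 0 1) * (v 1 x)) * (eGas 0) + (((-1)) * (christoffel g 0 0 1 x) * (g x 1 1) * (v 1 x)) * (eGas 1) + (((-1)) * (christoffel g 0 0 1 x) * (v 1 x)) * (ePs 1) + (((-1)) * (christoffel g 0 0 1 x) * (v 1 x)) * (eAx 1 0 1) + (((-1)) * (christoffel g 0 0 1 x) * (g x 0 1) * (v 1 x)) * (eGas 0) + (((-1))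 * (christoffel g 0 0 1 x) * (g x 1 1) * (v 1 x)) * (eGas 1) + (((-2)) * (christoffel g 1 0 1 x)) * (eH 1 1) + (((-2)) * (christoffel g 1 0 1 x) * (pd 1 (v 0) x)) * (hGs) + (((-2)) * (christoffel g 1 0 1 x) * (v 0 x)) * (eAx 0 1 1) + (((-2)) * (christoffel g 0 0 1 x) * (christoffel g 1 0 1 x) * (v 0 x)) * (hGs) + (((-2)) * (christoffel g 1 0 1 x) * (v 1 x)) * (eAx 1 1 1) + (((-2)) * (christoffel g 0 1 1 x) * (christoffel g 1 0 1 x) * (v 1 x)) * (hGs) + ((1)) * (eP 0 1 1) + (((-1)) * (g x 0 1)) * (eC 0 0 1) + (((-1)) * (lieConn v (christoffel g) 0 0 1 x)) * (hGs) + (((-1)) * (g x 0 1)) * (eC 0 0 1) + ((pd 0 (pd 1 (v 0)) x)) * (hGs) + (((-2)) * (g x 1 1)) * (eC 1 0 1) + ((pd 1 (v 0) x)) * (eAx 0 0 1) + ((pd 1 (v 0) x)) * (ePs 0) + ((pd 1 (v 0) x)) * (eAx 0 0 1) + ((pd 0 (v 0) x)) * (eAx 0 1 1) + ((christoffel g 0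 0 1 x) * (pd 0 (v 0) x)) * (hGs) + ((2) * (pd 1 (v 1) x)) * (eAx 0 1 1) + ((2) * (christoffel g 0 0 1 x) * (pd 1 (v 1) x)) * (hGs) + ((pd 0 (v 1) x)) * (eAx 1 1 1) + ((christoffel g 0 1 1 x) * (pd 0 (v 1) x)) * (hGs) + ((v 0 x)) * (eA' 0 0 1 1) + ((christoffel g 0 0 1 x) * (v 0 x)) * (eAx 0 0 1) + ((christoffel g 0 0 1 x) * (v 0 x)) * (ePs 0) + ((christoffel g 0 0 1 x) * (v 0 x)) * (eAx 0 0 1) + ((2) * (christoffel g 1 0 1 x) * (v 0 x)) * (eAx 0 1 1) + ((2) * (christoffel g 0 0 1 x) * (christoffel g 1 0 1 x) * (v 0 x)) * (hGs) + ((pd 0 (christoffel g 0 0 1) x) * (v 0 x)) * (hGs) + ((v 1 x)) * (eA' 0 1 1 1) + ((christoffel g 0 1 1 x) * (v 1 x)) * (eAx 0 0 1) + ((christoffel g 0 1 1 x) * (v 1 x)) * (ePs 0) + ((christoffel g 0 1 1 x) * (v 1 x)) * (eAx 0 0 1) + ((2) * (christoffel g 1 1 1 x) * (v 1 x)) * (eAx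 0 1 1) + ((2) * (christoffel g 0 0 1 x) * (christoffel g 1 1 1 x) * (v 1 x)) * (hGs) + ((pd 0 (christoffel g 0 1 1) x) * (v 1 x)) * (hGs) + ((christoffel g 0 0 1 x) * (v 1 x)) * (eAx 1 0 1) + ((christoffel g 0 0 1 x) * (g x 0 1) * (v 1 x)) * (eGas 0) + ((christoffel g 0 0 1 x) * (g x 1 1) * (v 1 x)) * (eGas 1) + ((christoffel g 0 0 1 x) * (v 1 x)) * (ePs 1) + ((christoffel g 0 0 1 x) * (v 1 x)) * (eAx 1 0 1) + ((christoffel g 0 0 1 x) * (g x 0 1) * (v 1 x)) * (eGas 0) + ((christoffel g 0 0 1 x) * (g x 1 1) * (v 1 x)) * (eGas 1) + (((-1)) * (christoffel g 0 1 1 x) * (v 1 x)) * (eAx 0 0 1) + (((-1)) * (christoffel g 0 1 1 x) * (v 1 x)) * (ePs 0) + (((-1)) * (christoffel g 0 1 1 x) * (v 1 x)) * (eAx 0 0 1) + ((2) * (christoffel g 1 0 1 x) * (v 1 x)) * (eAx 1 1 1) + ((2) * (christoffel g 0 1 1 x) * (christoffel g 1 0 1 x) * (v 1 x)) * (hGs)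 + (((-2)) * (christoffel g 1 1 1 x) * (v 1 x)) * (eAx 0 1 1) + (((-2)) * (christoffel g 0 0 1 x) * (christoffel g 1 1 1 x) * (v 1 x)) * (hGs) + (((-1)) * (pd 0 (christoffel g 0 1 1) x) * (v 1 x)) * (hGs) + ((pd 1 (christoffel g 0 0 1) x) * (v 1 x)) * (hGs)
  · linear_combination (norm := ring1) ((-1) * (v 0 x)) * (eRl 0 0) + (((-2)) * (lieMetric v g 0 0 x)) * (eGas 0) + (((-2)) * (christoffel g 0 0 1 x)) * (eH 0 0) + (((-2)) * (christoffel g 0 0 1 x) * (pd 0 (v 1) x)) * (hGs) + (((-2)) * (christoffel g 0 0 1 x) * (v 0 x)) * (eAx 0 0 0) + (((-2)) * (christoffel g 0 0 1 x) * (christoffel g 1 0 0 x) * (v 0 x)) * (hGs) + (((-2)) * (christoffel g 0 0 1 x) * (v 1 x)) * (eAx 1 0 0) + (((-4)) * (christoffel g 0 0 1 x) * (g x 0 0) * (v 1 x)) * (eGas 0) + (((-2)) * (christoffel g 0 0 1 x) * (g x 0 1) * (v 1 x)) * (eGas 1) + (((-2)) * (christoffel g 0 0 1 x) * (g x 1 0)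 * (v 1 x)) * (eGas 1) + (((-2)) * (christoffel g 0 0 1 x) * (christoffel g 1 0 1 x) * (v 1 x)) * (hGs) + (((-1)) * (lieMetric v g 0 1 x)) * (eGas 1) + (((-1)) * (christoffel g 1 0 1 x)) * (eH 0 1) + (((-1)) * (christoffel g 1 0 1 x) * (v 0 x)) * (eAx 0 0 1) + (((-1)) * (christoffel g 1 0 1 x) * (v 1 x)) * (eAx 1 0 1) + (((-1)) * (christoffel g 1 0 1 x) * (g x 0 1) * (v 1 x)) * (eGas 0) + (((-1)) * (christoffel g 1 0 1 x) * (g x 1 1) * (v 1 x)) * (eGas 1) + (((-1)) * (lieMetric v g 1 0 x)) * (eGas 1) + (((-1)) * (christoffel g 1 0 1 x)) * (eH 1 0) + (((-1)) * (christoffel g 1 0 1 x) * (pd 0 (v 0) x)) * (hGs) + (((-1)) * (christoffel g 1 0 1 x) * (pd 1 (v 1) x)) * (hGs) + (((-1)) * (christoffel g 1 0 1 x) * (v 0 x)) * (ePs 0) + (((-1)) * (christoffel g 1 0 1 x) * (v 0 x)) * (eAx 0 0 1) + (((-1)) * (christoffel g 1 0 1 x) * (v 1 x)) * (ePs 1)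 + (((-1)) * (christoffel g 1 0 1 x) * (v 1 x)) * (eAx 1 0 1) + (((-1)) * (christoffel g 1 0 1 x) * (g x 0 1) * (v 1 x)) * (eGas 0) + (((-1)) * (christoffel g 1 0 1 x) * (g x 1 1) * (v 1 x)) * (eGas 1) + ((1)) * (eP 1 0 0) + (((-2)) * (g x 0 0)) * (eC 0 1 0) + (((-2)) * (g x 0 0) * (pd 1 (v 1) x)) * (eGas 0) + ((2) * (g x 0 0) * (pd 1 (v 0) x)) * (eGas 1) + (((-2)) * (g x 0 0) * (v 0 x)) * (eDGs 0 0) + (((-2)) * (g x 0 0) * (v 1 x)) * (eDGs 1 0) + (((-1)) * (g x 0 1)) * (eC 1 1 0) + ((g x 0 1) * (pd 0 (v 1) x)) * (eGas 0) + (((-1)) * (g x 0 1) * (pd 0 (v 0) x)) * (eGas 1) + (((-1)) * (g x 0 1) * (v 0 x)) * (eDGs 0 1) + (((-1)) * (g x 0 1) * (v 1 x)) * (eDGs 1 1) + (((-1)) * (lieConn v (christoffel g) 1 1 0 x)) * (hGs) + (((-1)) * (g x 0 1)) * (eC 1 1 0) + ((g x 0 1) * (pd 0 (v 1) x)) * (eGas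 0) + (((-1)) * (g x 0 1) * (pd 0 (v 0) x)) * (eGas 1) + (((-1)) * (g x 0 1) * (v 0 x)) * (eDGs 0 1) + (((-1)) * (g x 0 1) * (v 1 x)) * (eDGs 1 1) + (((-1)) * (g x 0 1)) * (eW2s 1) + ((pd 1 (pd 0 (v 1)) x)) * (hGs) + ((g x 0 1)) * (eW2s 1) + ((pd 1 (v 0) x)) * (eAx 0 0 0) + ((christoffel g 1 0 0 x) * (pd 1 (v 0) x)) * (hGs) + ((2) * (pd 0 (v 0) x)) * (eAx 1 0 0) + ((4) * (g x 0 0) * (pd 0 (v 0) x)) * (eGas 0) + ((2) * (g x 0 1) * (pd 0 (v 0) x)) * (eGas 1) + ((2) * (g x 1 0) * (pd 0 (v 0) x)) * (eGas 1) + ((2) * (christoffel g 1 0 1 x) * (pd 0 (v 0) x)) * (hGs) + ((pd 1 (v 1) x)) * (eAx 1 0 0) + ((2) * (g x 0 0) * (pd 1 (v 1) x)) * (eGas 0) + ((g x 0 1) * (pd 1 (v 1) x)) * (eGas 1) + ((g x 1 0) * (pd 1 (v 1) x)) * (eGas 1) + ((christoffel g 1 0 1 x) * (pd 1 (v 1)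 x)) * (hGs) + ((pd 0 (v 1) x)) * (eAx 1 0 1) + ((g x 0 1) * (pd 0 (v 1) x)) * (eGas 0) + ((g x 1 1) * (pd 0 (v 1) x)) * (eGas 1) + ((pd 0 (v 1) x)) * (ePs 1) + ((pd 0 (v 1) x)) * (eAx 1 0 1) + ((g x 0 1) * (pd 0 (v 1) x)) * (eGas 0) + ((g x 1 1) * (pd 0 (v 1) x)) * (eGas 1) + ((v 0 x)) * (eA' 1 0 0 0) + ((2) * (christoffel g 0 0 0 x) * (v 0 x)) * (eAx 1 0 0) + ((4) * (christoffel g 0 0 0 x) * (g x 0 0) * (v 0 x)) * (eGas 0) + ((2) * (christoffel g 0 0 0 x) * (g x 0 1) * (v 0 x)) * (eGas 1) + ((2) * (christoffel g 0 0 0 x) * (g x 1 0) * (v 0 x)) * (eGas 1) + ((2) * (christoffel g 0 0 0 x) * (christoffel g 1 0 1 x) * (v 0 x)) * (hGs) + ((christoffel g 1 0 0 x) * (v 0 x)) * (eAx 1 0 1) + ((christoffel g 1 0 0 x) * (g x 0 1) * (v 0 x)) * (eGas 0) + ((christoffel g 1 0 0 x) * (g x 1 1) * (v 0 x)) * (eGas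 1) + ((christoffel g 1 0 0 x) * (v 0 x)) * (ePs 1) + ((christoffel g 1 0 0 x) * (v 0 x)) * (eAx 1 0 1) + ((christoffel g 1 0 0 x) * (g x 0 1) * (v 0 x)) * (eGas 0) + ((christoffel g 1 0 0 x) * (g x 1 1) * (v 0 x)) * (eGas 1) + ((pd 1 (christoffel g 1 0 0) x) * (v 0 x)) * (hGs) + ((v 1 x)) * (eA' 1 1 0 0) + ((2) * (pd 1 (fun y => g y 0 0) x) * (v 1 x)) * (eGas 0) + ((2) * (christoffel g 0 0 1 x) * (v 1 x)) * (eAx 1 0 0) + ((4) * (christoffel g 0 0 1 x) * (g x 0 0) * (v 1 x)) * (eGas 0) + ((2) * (christoffel g 0 0 1 x) * (g x 0 1) * (v 1 x)) * (eGas 1) + ((2) * (christoffel g 0 0 1 x) * (g x 1 0) * (v 1 x)) * (eGas 1) + ((2) * (christoffel g 0 0 1 x) * (christoffel g 1 0 1 x) * (v 1 x)) * (hGs) + ((pd 1 (fun y => g y 0 1) x) * (v 1 x)) * (eGas 1) + ((christoffel g 1 0 1 x) * (v 1 x)) * (eAx 1 0 1) + ((christoffel g 1 0 1 x) * (g x 0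 1) * (v 1 x)) * (eGas 0) + ((christoffel g 1 0 1 x) * (g x 1 1) * (v 1 x)) * (eGas 1) + ((pd 1 (fun y => g y 1 0) x) * (v 1 x)) * (eGas 1) + ((christoffel g 1 0 1 x) * (v 1 x)) * (ePs 1) + ((christoffel g 1 0 1 x) * (v 1 x)) * (eAx 1 0 1) + ((christoffel g 1 0 1 x) * (g x 0 1) * (v 1 x)) * (eGas 0) + ((christoffel g 1 0 1 x) * (g x 1 1) * (v 1 x)) * (eGas 1) + ((2) * (g x 0 0) * (v 1 x)) * (eDGs 1 0) + ((g x 0 1) * (v 1 x)) * (eDGs 1 1) + ((g x 1 0) * (v 1 x)) * (eDGs 1 1) + ((pd 1 (christoffel g 1 0 1) x) * (v 1 x)) * (hGs) + (((-2)) * (christoffel g 0 0 0 x) * (v 0 x)) * (eAx 1 0 0) + (((-4)) * (christoffel g 0 0 0 x) * (g x 0 0) * (v 0 x)) * (eGas 0) + (((-2)) * (christoffel g 0 0 0 x) * (g x 0 1) * (v 0 x)) * (eGas 1) + (((-2)) * (christoffel g 0 0 0 x) * (g x 1 0) * (v 0 x)) * (eGas 1) + (((-2)) * (christoffel g 0 0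 0 x) * (christoffel g 1 0 1 x) * (v 0 x)) * (hGs) + ((2) * (pd 0 (fun y => g y 0 0) x) * (v 0 x)) * (eGas 0) + ((2) * (christoffel g 0 0 1 x) * (v 0 x)) * (eAx 0 0 0) + ((2) * (christoffel g 0 0 1 x) * (christoffel g 1 0 0 x) * (v 0 x)) * (hGs) + (((-1)) * (christoffel g 1 0 0 x) * (v 0 x)) * (eAx 1 0 1) + (((-1)) * (christoffel g 1 0 0 x) * (g x 0 1) * (v 0 x)) * (eGas 0) + (((-1)) * (christoffel g 1 0 0 x) * (g x 1 1) * (v 0 x)) * (eGas 1) + (((-1)) * (christoffel g 1 0 0 x) * (v 0 x)) * (ePs 1) + (((-1)) * (christoffel g 1 0 0 x) * (v 0 x)) * (eAx 1 0 1) + (((-1)) * (christoffel g 1 0 0 x) * (g x 0 1) * (v 0 x)) * (eGas 0) + (((-1)) * (christoffel g 1 0 0 x) * (g x 1 1) * (v 0 x)) * (eGas 1) + ((pd 0 (fun y => g y 0 1) x) * (v 0 x)) * (eGas 1) + ((christoffel g 1 0 1 x) * (v 0 x)) * (eAx 0 0 1) + ((pd 0 (fun y => g y 1 0) x) * (v 0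 x)) * (eGas 1) + ((christoffel g 1 0 1 x) * (v 0 x)) * (ePs 0) + ((christoffel g 1 0 1 x) * (v 0 x)) * (eAx 0 0 1) + ((2) * (g x 0 0) * (v 0 x)) * (eDGs 0 0) + ((g x 0 1) * (v 0 x)) * (eDGs 0 1) + ((g x 1 0) * (v 0 x)) * (eDGs 0 1) + ((pd 0 (christoffel g 1 0 1) x) * (v 0 x)) * (hGs) + (((-1)) * (pd 1 (christoffel g 1 0 0) x) * (v 0 x)) * (hGs)
  · linear_combination (norm := ring1) ((-1) * (v 0 x)) * (eRl 0 1) + (((-1)) * (lieMetric v g 0 1 x)) * (eGas 0) + (((-1)) * (christoffel g 0 0 1 x)) * (eH 0 1) + (((-1)) * (christoffel g 0 0 1 x) * (v 0 x)) * (eAx 0 0 1) + (((-1)) * (christoffel g 0 0 1 x) * (v 1 x)) * (eAx 1 0 1) + (((-1)) * (christoffel g 0 0 1 x) * (g x 0 1) * (v 1 x)) * (eGas 0) + (((-1)) * (christoffel g 0 0 1 x) * (g x 1 1) * (v 1 x)) * (eGas 1) + (((-1)) * (christoffel g 0 1 1 x)) * (eH 0 0) + (((-1)) * (christoffel g 0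 1 1 x) * (pd 0 (v 1) x)) * (hGs) + (((-1)) * (christoffel g 0 1 1 x) * (v 0 x)) * (eAx 0 0 0) + (((-1)) * (christoffel g 0 1 1 x) * (christoffel g 1 0 0 x) * (v 0 x)) * (hGs) + (((-1)) * (christoffel g 0 1 1 x) * (v 1 x)) * (eAx 1 0 0) + (((-2)) * (christoffel g 0 1 1 x) * (g x 0 0) * (v 1 x)) * (eGas 0) + (((-1)) * (christoffel g 0 1 1 x) * (g x 0 1) * (v 1 x)) * (eGas 1) + (((-1)) * (christoffel g 0 1 1 x) * (g x 1 0) * (v 1 x)) * (eGas 1) + (((-1)) * (christoffel g 0 1 1 x) * (christoffel g 1 0 1 x) * (v 1 x)) * (hGs) + (((-1)) * (lieMetric v g 1 1 x)) * (eGas 1) + (((-1)) * (christoffel g 1 0 1 x)) * (eH 1 1) + (((-1)) * (christoffel g 1 0 1 x) * (pd 1 (v 0) x)) * (hGs) + (((-1)) * (christoffel g 1 0 1 x) * (v 0 x)) * (eAx 0 1 1) + (((-1)) * (christoffel g 0 0 1 x) * (christoffel g 1 0 1 x) * (v 0 x)) * (hGs) + (((-1)) * (christoffel g 1 0 1 x)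 * (v 1 x)) * (eAx 1 1 1) + (((-1)) * (christoffel g 0 1 1 x) * (christoffel g 1 0 1 x) * (v 1 x)) * (hGs) + (((-1)) * (christoffel g 1 1 1 x)) * (eH 0 1) + (((-1)) * (christoffel g 1 1 1 x) * (v 0 x)) * (eAx 0 0 1) + (((-1)) * (christoffel g 1 1 1 x) * (v 1 x)) * (eAx 1 0 1) + (((-1)) * (christoffel g 1 1 1 x) * (g x 0 1) * (v 1 x)) * (eGas 0) + (((-1)) * (christoffel g 1 1 1 x) * (g x 1 1) * (v 1 x)) * (eGas 1) + ((1)) * (eP 1 0 1) + (((-1)) * (g x 0 0)) * (eC 0 1 1) + (((-1)) * (g x 0 0) * (pd 1 (v 0) x)) * (eGas 0) + (((-1)) * (g x 0 1)) * (eC 0 1 0) + (((-1)) * (g x 0 1) * (pd 1 (v 1) x)) * (eGas 0) + ((g x 0 1) * (pd 1 (v 0) x)) * (eGas 1) + (((-1)) * (g x 0 1) * (v 0 x)) * (eDGs 0 0) + (((-1)) * (g x 0 1) * (v 1 x)) * (eDGs 1 0) + (((-1)) * (g x 0 1)) * (eC 1 1 1) + (((-1)) * (g x 0 1) * (pd 1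 (v 0) x)) * (eGas 1) + (((-1)) * (g x 1 1)) * (eC 1 1 0) + ((g x 1 1) * (pd 0 (v 1) x)) * (eGas 0) + (((-1)) * (g x 1 1) * (pd 0 (v 0) x)) * (eGas 1) + (((-1)) * (g x 1 1) * (v 0 x)) * (eDGs 0 1) + (((-1)) * (g x 1 1) * (v 1 x)) * (eDGs 1 1) + ((pd 1 (v 0) x)) * (eAx 0 0 1) + ((pd 1 (v 0) x)) * (eAx 1 0 0) + ((2) * (g x 0 0) * (pd 1 (v 0) x)) * (eGas 0) + ((g x 0 1) * (pd 1 (v 0) x)) * (eGas 1) + ((g x 1 0) * (pd 1 (v 0) x)) * (eGas 1) + ((christoffel g 1 0 1 x) * (pd 1 (v 0) x)) * (hGs) + ((pd 0 (v 0) x)) * (eAx 1 0 1) + ((g x 0 1) * (pd 0 (v 0) x)) * (eGas 0) + ((g x 1 1) * (pd 0 (v 0) x)) * (eGas 1) + ((2) * (pd 1 (v 1) x)) * (eAx 1 0 1) + ((2) * (g x 0 1) * (pd 1 (v 1) x)) * (eGas 0) + ((2) * (g x 1 1) * (pd 1 (v 1) x)) * (eGas 1) + ((pd 0 (v 1) x))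 * (eAx 1 1 1) + ((christoffel g 0 1 1 x) * (pd 0 (v 1) x)) * (hGs) + ((v 0 x)) * (eA' 1 0 0 1) + ((christoffel g 0 0 0 x) * (v 0 x)) * (eAx 1 0 1) + ((christoffel g 0 0 0 x) * (g x 0 1) * (v 0 x)) * (eGas 0) + ((christoffel g 0 0 0 x) * (g x 1 1) * (v 0 x)) * (eGas 1) + ((christoffel g 0 0 1 x) * (v 0 x)) * (eAx 1 0 0) + ((2) * (christoffel g 0 0 1 x) * (g x 0 0) * (v 0 x)) * (eGas 0) + ((christoffel g 0 0 1 x) * (g x 0 1) * (v 0 x)) * (eGas 1) + ((christoffel g 0 0 1 x) * (g x 1 0) * (v 0 x)) * (eGas 1) + ((christoffel g 0 0 1 x) * (christoffel g 1 0 1 x) * (v 0 x)) * (hGs) + ((christoffel g 1 0 0 x) * (v 0 x)) * (eAx 1 1 1) + ((christoffel g 0 1 1 x) * (christoffel g 1 0 0 x) * (v 0 x)) * (hGs) + ((christoffel g 1 0 1 x) * (v 0 x)) * (eAx 1 0 1) + ((christoffel g 1 0 1 x) * (g x 0 1) * (v 0 x)) * (eGas 0) + ((christoffel g 1 0 1 x)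 * (g x 1 1) * (v 0 x)) * (eGas 1) + ((v 1 x)) * (eA' 1 1 0 1) + ((pd 1 (fun y => g y 0 1) x) * (v 1 x)) * (eGas 0) + ((christoffel g 0 0 1 x) * (v 1 x)) * (eAx 1 0 1) + ((christoffel g 0 0 1 x) * (g x 0 1) * (v 1 x)) * (eGas 0) + ((christoffel g 0 0 1 x) * (g x 1 1) * (v 1 x)) * (eGas 1) + ((christoffel g 0 1 1 x) * (v 1 x)) * (eAx 1 0 0) + ((2) * (christoffel g 0 1 1 x) * (g x 0 0) * (v 1 x)) * (eGas 0) + ((christoffel g 0 1 1 x) * (g x 0 1) * (v 1 x)) * (eGas 1) + ((christoffel g 0 1 1 x) * (g x 1 0) * (v 1 x)) * (eGas 1) + ((christoffel g 0 1 1 x) * (christoffel g 1 0 1 x) * (v 1 x)) * (hGs) + ((pd 1 (fun y => g y 1 1) x) * (v 1 x)) * (eGas 1) + ((christoffel g 1 0 1 x) * (v 1 x)) * (eAx 1 1 1) + ((christoffel g 0 1 1 x) * (christoffel g 1 0 1 x) * (v 1 x)) * (hGs) + ((christoffel g 1 1 1 x) * (v 1 x)) * (eAx 1 0 1) + ((christoffel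 g 1 1 1 x) * (g x 0 1) * (v 1 x)) * (eGas 0) + ((christoffel g 1 1 1 x) * (g x 1 1) * (v 1 x)) * (eGas 1) + ((g x 0 1) * (v 1 x)) * (eDGs 1 0) + ((g x 1 1) * (v 1 x)) * (eDGs 1 1) + (((-1)) * (christoffel g 0 0 0 x) * (v 0 x)) * (eAx 1 0 1) + (((-1)) * (christoffel g 0 0 0 x) * (g x 0 1) * (v 0 x)) * (eGas 0) + (((-1)) * (christoffel g 0 0 0 x) * (g x 1 1) * (v 0 x)) * (eGas 1) + (((-1)) * (christoffel g 0 0 1 x) * (v 0 x)) * (eAx 1 0 0) + (((-2)) * (christoffel g 0 0 1 x) * (g x 0 0) * (v 0 x)) * (eGas 0) + (((-1)) * (christoffel g 0 0 1 x) * (g x 0 1) * (v 0 x)) * (eGas 1) + (((-1)) * (christoffel g 0 0 1 x) * (g x 1 0) * (v 0 x)) * (eGas 1) + (((-1)) * (christoffel g 0 0 1 x) * (christoffel g 1 0 1 x) * (v 0 x)) * (hGs) + ((pd 0 (fun y => g y 0 1) x) * (v 0 x)) * (eGas 0) + ((christoffel g 0 0 1 x) * (v 0 x)) * (eAx 0 0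 1) + ((christoffel g 0 1 1 x) * (v 0 x)) * (eAx 0 0 0) + ((christoffel g 0 1 1 x) * (christoffel g 1 0 0 x) * (v 0 x)) * (hGs) + (((-1)) * (christoffel g 1 0 0 x) * (v 0 x)) * (eAx 1 1 1) + (((-1)) * (christoffel g 0 1 1 x) * (christoffel g 1 0 0 x) * (v 0 x)) * (hGs) + (((-1)) * (christoffel g 1 0 1 x) * (v 0 x)) * (eAx 1 0 1) + (((-1)) * (christoffel g 1 0 1 x) * (g x 0 1) * (v 0 x)) * (eGas 0) + (((-1)) * (christoffel g 1 0 1 x) * (g x 1 1) * (v 0 x)) * (eGas 1) + ((pd 0 (fun y => g y 1 1) x) * (v 0 x)) * (eGas 1) + ((christoffel g 1 0 1 x) * (v 0 x)) * (eAx 0 1 1) + ((christoffel g 0 0 1 x) * (christoffel g 1 0 1 x) * (v 0 x)) * (hGs) + ((christoffel g 1 1 1 x) * (v 0 x)) * (eAx 0 0 1) + ((g x 0 1) * (v 0 x)) * (eDGs 0 0) + ((g x 1 1) * (v 0 x)) * (eDGs 0 1)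
  · linear_combination (norm := ring1) ((-1) * (v 0 x)) * (eRl 0 1) + (((-1)) * (lieMetric v g 1 0 x)) * (eGas 0) + (((-1)) * (christoffel g 0 0 1 x)) * (eH 1 0) + (((-1)) * (christoffel g 0 0 1 x) * (pd 0 (v 0) x)) * (hGs) + (((-1)) * (christoffel g 0 0 1 x) * (pd 1 (v 1) x)) * (hGs) + (((-1)) * (christoffel g 0 0 1 x) * (v 0 x)) * (ePs 0) + (((-1)) * (christoffel g 0 0 1 x) * (v 0 x)) * (eAx 0 0 1) + (((-1)) * (christoffel g 0 0 1 x) * (v 1 x)) * (ePs 1) + (((-1)) * (christoffel g 0 0 1 x) * (v 1 x)) * (eAx 1 0 1) + (((-1)) * (christoffel g 0 0 1 x) * (g x 0 1) * (v 1 x)) * (eGas 0) + (((-1)) * (christoffel g 0 0 1 x) * (g x 1 1) * (v 1 x)) * (eGas 1) + (((-1)) * (christoffel g 0 1 1 x)) * (eH 0 0) + (((-1)) * (christoffel g 0 1 1 x) * (pd 0 (v 1) x)) * (hGs) + (((-1)) * (christoffel g 0 1 1 x) * (v 0 x)) * (eAx 0 0 0) + (((-1)) * (christoffel g 0 1 1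 x) * (christoffel g 1 0 0 x) * (v 0 x)) * (hGs) + (((-1)) * (christoffel g 0 1 1 x) * (v 1 x)) * (eAx 1 0 0) + (((-2)) * (christoffel g 0 1 1 x) * (g x 0 0) * (v 1 x)) * (eGas 0) + (((-1)) * (christoffel g 0 1 1 x) * (g x 0 1) * (v 1 x)) * (eGas 1) + (((-1)) * (christoffel g 0 1 1 x) * (g x 1 0) * (v 1 x)) * (eGas 1) + (((-1)) * (christoffel g 0 1 1 x) * (christoffel g 1 0 1 x) * (v 1 x)) * (hGs) + (((-1)) * (lieMetric v g 1 1 x)) * (eGas 1) + (((-1)) * (christoffel g 1 0 1 x)) * (eH 1 1) + (((-1)) * (christoffel g 1 0 1 x) * (pd 1 (v 0) x)) * (hGs) + (((-1)) * (christoffel g 1 0 1 x) * (v 0 x)) * (eAx 0 1 1) + (((-1)) * (christoffel g 0 0 1 x) * (christoffel g 1 0 1 x) * (v 0 x)) * (hGs) + (((-1)) * (christoffel g 1 0 1 x) * (v 1 x)) * (eAx 1 1 1) + (((-1)) * (christoffel g 0 1 1 x) * (christoffel g 1 0 1 x) * (v 1 x)) * (hGs) + (((-1)) * (christoffel g 1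 1 1 x)) * (eH 1 0) + (((-1)) * (christoffel g 1 1 1 x) * (pd 0 (v 0) x)) * (hGs) + (((-1)) * (christoffel g 1 1 1 x) * (pd 1 (v 1) x)) * (hGs) + (((-1)) * (christoffel g 1 1 1 x) * (v 0 x)) * (ePs 0) + (((-1)) * (christoffel g 1 1 1 x) * (v 0 x)) * (eAx 0 0 1) + (((-1)) * (christoffel g 1 1 1 x) * (v 1 x)) * (ePs 1) + (((-1)) * (christoffel g 1 1 1 x) * (v 1 x)) * (eAx 1 0 1) + (((-1)) * (christoffel g 1 1 1 x) * (g x 0 1) * (v 1 x)) * (eGas 0) + (((-1)) * (christoffel g 1 1 1 x) * (g x 1 1) * (v 1 x)) * (eGas 1) + ((1)) * (eP 1 1 0) + (((-1)) * (g x 0 0)) * (eC 0 1 1) + (((-1)) * (g x 0 0) * (pd 1 (v 0) x)) * (eGas 0) + (((-1)) * (lieConn v (christoffel g) 0 1 0 x)) * (hGs) + (((-1)) * (g x 0 1)) * (eC 0 1 0) + (((-1)) * (g x 0 1) * (pd 1 (v 1) x)) * (eGas 0) + ((g x 0 1) * (pd 1 (v 0) x)) * (eGas 1) + (((-1)) *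 (g x 0 1) * (v 0 x)) * (eDGs 0 0) + (((-1)) * (g x 0 1) * (v 1 x)) * (eDGs 1 0) + (((-1)) * (g x 0 1)) * (eW2s 0) + (((-1)) * (lieConn v (christoffel g) 1 1 1 x)) * (hGs) + (((-1)) * (g x 0 1)) * (eC 1 1 1) + (((-1)) * (g x 0 1) * (pd 1 (v 0) x)) * (eGas 1) + ((pd 1 (pd 0 (v 0)) x)) * (hGs) + ((g x 0 1)) * (eW2s 0) + ((pd 1 (pd 1 (v 1)) x)) * (hGs) + (((-1)) * (g x 1 1)) * (eC 1 1 0) + ((g x 1 1) * (pd 0 (v 1) x)) * (eGas 0) + (((-1)) * (g x 1 1) * (pd 0 (v 0) x)) * (eGas 1) + (((-1)) * (g x 1 1) * (v 0 x)) * (eDGs 0 1) + (((-1)) * (g x 1 1) * (v 1 x)) * (eDGs 1 1) + ((pd 1 (v 0) x)) * (ePs 0) + ((pd 1 (v 0) x)) * (eAx 0 0 1) + ((pd 1 (v 0) x)) * (eAx 1 0 0) + ((2) * (g x 0 0) * (pd 1 (v 0) x)) * (eGas 0) + ((g x 0 1) * (pd 1 (v 0) x)) * (eGas 1) + ((g x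 1 0) * (pd 1 (v 0) x)) * (eGas 1) + ((christoffel g 1 0 1 x) * (pd 1 (v 0) x)) * (hGs) + ((pd 0 (v 0) x)) * (ePs 1) + ((pd 0 (v 0) x)) * (eAx 1 0 1) + ((g x 0 1) * (pd 0 (v 0) x)) * (eGas 0) + ((g x 1 1) * (pd 0 (v 0) x)) * (eGas 1) + ((2) * (pd 1 (v 1) x)) * (ePs 1) + ((2) * (pd 1 (v 1) x)) * (eAx 1 0 1) + ((2) * (g x 0 1) * (pd 1 (v 1) x)) * (eGas 0) + ((2) * (g x 1 1) * (pd 1 (v 1) x)) * (eGas 1) + ((pd 0 (v 1) x)) * (eAx 1 1 1) + ((christoffel g 0 1 1 x) * (pd 0 (v 1) x)) * (hGs) + ((v 0 x)) * (eA' 1 0 1 0) + ((christoffel g 0 0 0 x) * (v 0 x)) * (ePs 1) + ((christoffel g 0 0 0 x) * (v 0 x)) * (eAx 1 0 1) + ((christoffel g 0 0 0 x) * (g x 0 1) * (v 0 x)) * (eGas 0) + ((christoffel g 0 0 0 x) * (g x 1 1) * (v 0 x)) * (eGas 1) + ((christoffel g 0 0 1 x) * (v 0 x)) * (eAx 1 0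 0) + ((2) * (christoffel g 0 0 1 x) * (g x 0 0) * (v 0 x)) * (eGas 0) + ((christoffel g 0 0 1 x) * (g x 0 1) * (v 0 x)) * (eGas 1) + ((christoffel g 0 0 1 x) * (g x 1 0) * (v 0 x)) * (eGas 1) + ((christoffel g 0 0 1 x) * (christoffel g 1 0 1 x) * (v 0 x)) * (hGs) + ((christoffel g 1 0 0 x) * (v 0 x)) * (eAx 1 1 1) + ((christoffel g 0 1 1 x) * (christoffel g 1 0 0 x) * (v 0 x)) * (hGs) + ((christoffel g 1 0 1 x) * (v 0 x)) * (ePs 1) + ((christoffel g 1 0 1 x) * (v 0 x)) * (eAx 1 0 1) + ((christoffel g 1 0 1 x) * (g x 0 1) * (v 0 x)) * (eGas 0) + ((christoffel g 1 0 1 x) * (g x 1 1) * (v 0 x)) * (eGas 1) + ((pd 1 (christoffel g 0 0 0) x) * (v 0 x)) * (hGs) + ((pd 1 (christoffel g 1 0 1) x) * (v 0 x)) * (hGs) + ((v 1 x)) * (eA' 1 1 1 0) + ((pd 1 (fun y => g y 1 0) x) * (v 1 x)) * (eGas 0) + ((christoffel g 0 0 1 x) * (v 1 x)) * (ePs 1)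 + ((christoffel g 0 0 1 x) * (v 1 x)) * (eAx 1 0 1) + ((christoffel g 0 0 1 x) * (g x 0 1) * (v 1 x)) * (eGas 0) + ((christoffel g 0 0 1 x) * (g x 1 1) * (v 1 x)) * (eGas 1) + ((christoffel g 0 1 1 x) * (v 1 x)) * (eAx 1 0 0) + ((2) * (christoffel g 0 1 1 x) * (g x 0 0) * (v 1 x)) * (eGas 0) + ((christoffel g 0 1 1 x) * (g x 0 1) * (v 1 x)) * (eGas 1) + ((christoffel g 0 1 1 x) * (g x 1 0) * (v 1 x)) * (eGas 1) + ((christoffel g 0 1 1 x) * (christoffel g 1 0 1 x) * (v 1 x)) * (hGs) + ((pd 1 (fun y => g y 1 1) x) * (v 1 x)) * (eGas 1) + ((christoffel g 1 0 1 x) * (v 1 x)) * (eAx 1 1 1) + ((christoffel g 0 1 1 x) * (christoffel g 1 0 1 x) * (v 1 x)) * (hGs) + ((christoffel g 1 1 1 x) * (v 1 x)) * (ePs 1) + ((christoffel g 1 1 1 x) * (v 1 x)) * (eAx 1 0 1) + ((christoffel g 1 1 1 x) * (g x 0 1) * (v 1 x)) * (eGas 0) + ((christoffel g 1 1 1 x)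 * (g x 1 1) * (v 1 x)) * (eGas 1) + ((g x 1 0) * (v 1 x)) * (eDGs 1 0) + ((pd 1 (christoffel g 0 0 1) x) * (v 1 x)) * (hGs) + ((g x 1 1) * (v 1 x)) * (eDGs 1 1) + ((pd 1 (christoffel g 1 1 1) x) * (v 1 x)) * (hGs) + (((-1)) * (christoffel g 0 0 0 x) * (v 0 x)) * (eAx 1 0 1) + (((-1)) * (christoffel g 0 0 0 x) * (g x 0 1) * (v 0 x)) * (eGas 0) + (((-1)) * (christoffel g 0 0 0 x) * (g x 1 1) * (v 0 x)) * (eGas 1) + (((-1)) * (christoffel g 0 0 1 x) * (v 0 x)) * (eAx 1 0 0) + (((-2)) * (christoffel g 0 0 1 x) * (g x 0 0) * (v 0 x)) * (eGas 0) + (((-1)) * (christoffel g 0 0 1 x) * (g x 0 1) * (v 0 x)) * (eGas 1) + (((-1)) * (christoffel g 0 0 1 x) * (g x 1 0) * (v 0 x)) * (eGas 1) + (((-1)) * (christoffel g 0 0 1 x) * (christoffel g 1 0 1 x) * (v 0 x)) * (hGs) + ((pd 0 (fun y => g y 0 1) x) * (v 0 x)) * (eGas 0) + ((christoffel g 0 0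 1 x) * (v 0 x)) * (eAx 0 0 1) + ((christoffel g 0 1 1 x) * (v 0 x)) * (eAx 0 0 0) + ((christoffel g 0 1 1 x) * (christoffel g 1 0 0 x) * (v 0 x)) * (hGs) + (((-1)) * (christoffel g 1 0 0 x) * (v 0 x)) * (eAx 1 1 1) + (((-1)) * (christoffel g 0 1 1 x) * (christoffel g 1 0 0 x) * (v 0 x)) * (hGs) + (((-1)) * (christoffel g 1 0 1 x) * (v 0 x)) * (eAx 1 0 1) + (((-1)) * (christoffel g 1 0 1 x) * (g x 0 1) * (v 0 x)) * (eGas 0) + (((-1)) * (christoffel g 1 0 1 x) * (g x 1 1) * (v 0 x)) * (eGas 1) + ((pd 0 (fun y => g y 1 1) x) * (v 0 x)) * (eGas 1) + ((christoffel g 1 0 1 x) * (v 0 x)) * (eAx 0 1 1) + ((christoffel g 0 0 1 x) * (christoffel g 1 0 1 x) * (v 0 x)) * (hGs) + ((christoffel g 1 1 1 x) * (v 0 x)) * (eAx 0 0 1) + ((g x 0 1) * (v 0 x)) * (eDGs 0 0) + ((g x 1 1) * (v 0 x)) * (eDGs 0 1)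
  · linear_combination (norm := ring1) ((-1) * (v 0 x)) * (eRl 1 1) + (((-1)) * (christoffel g 0 1 1 x)) * (eH 0 1) + (((-1)) * (christoffel g 0 1 1 x)) * (eH 1 0) + (((-1)) * (christoffel g 0 1 1 x) * (pd 0 (v 0) x)) * (hGs) + (((-1)) * (christoffel g 0 1 1 x) * (pd 1 (v 1) x)) * (hGs) + (((-1)) * (christoffel g 0 1 1 x) * (v 0 x)) * (eAx 0 0 1) + (((-1)) * (christoffel g 0 1 1 x) * (v 0 x)) * (ePs 0) + (((-1)) * (christoffel g 0 1 1 x) * (v 0 x)) * (eAx 0 0 1) + (((-1)) * (christoffel g 0 1 1 x) * (v 1 x)) * (eAx 1 0 1) + (((-1)) * (christoffel g 0 1 1 x) * (g x 0 1) * (v 1 x)) * (eGas 0) + (((-1)) * (christoffel g 0 1 1 x) * (g x 1 1) * (v 1 x)) * (eGas 1) + (((-1)) * (christoffel g 0 1 1 x) * (v 1 x)) * (ePs 1) + (((-1)) * (christoffel g 0 1 1 x) * (v 1 x)) * (eAx 1 0 1) + (((-1)) * (christoffel g 0 1 1 x) * (g x 0 1) * (v 1 x)) * (eGas 0) + (((-1))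 * (christoffel g 0 1 1 x) * (g x 1 1) * (v 1 x)) * (eGas 1) + (((-2)) * (christoffel g 1 1 1 x)) * (eH 1 1) + (((-2)) * (christoffel g 1 1 1 x) * (pd 1 (v 0) x)) * (hGs) + (((-2)) * (christoffel g 1 1 1 x) * (v 0 x)) * (eAx 0 1 1) + (((-2)) * (christoffel g 0 0 1 x) * (christoffel g 1 1 1 x) * (v 0 x)) * (hGs) + (((-2)) * (christoffel g 1 1 1 x) * (v 1 x)) * (eAx 1 1 1) + (((-2)) * (christoffel g 0 1 1 x) * (christoffel g 1 1 1 x) * (v 1 x)) * (hGs) + ((1)) * (eP 1 1 1) + (((-1)) * (g x 0 1)) * (eC 0 1 1) + (((-1)) * (g x 0 1) * (pd 1 (v 0) x)) * (eGas 0) + (((-1)) * (lieConn v (christoffel g) 0 1 1 x)) * (hGs) + (((-1)) * (g x 0 1)) * (eC 0 1 1) + (((-1)) * (g x 0 1) * (pd 1 (v 0) x)) * (eGas 0) + ((pd 1 (pd 1 (v 0)) x)) * (hGs) + (((-2)) * (g x 1 1)) * (eC 1 1 1) + (((-2)) * (g x 1 1) * (pd 1 (v 0) x)) * (eGas 1)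 + ((pd 1 (v 0) x)) * (eAx 0 1 1) + ((christoffel g 0 0 1 x) * (pd 1 (v 0) x)) * (hGs) + ((pd 1 (v 0) x)) * (eAx 1 0 1) + ((g x 0 1) * (pd 1 (v 0) x)) * (eGas 0) + ((g x 1 1) * (pd 1 (v 0) x)) * (eGas 1) + ((pd 1 (v 0) x)) * (ePs 1) + ((pd 1 (v 0) x)) * (eAx 1 0 1) + ((g x 0 1) * (pd 1 (v 0) x)) * (eGas 0) + ((g x 1 1) * (pd 1 (v 0) x)) * (eGas 1) + ((3) * (pd 1 (v 1) x)) * (eAx 1 1 1) + ((3) * (christoffel g 0 1 1 x) * (pd 1 (v 1) x)) * (hGs) + ((v 0 x)) * (eA' 1 0 1 1) + ((christoffel g 0 0 1 x) * (v 0 x)) * (eAx 1 0 1) + ((christoffel g 0 0 1 x) * (g x 0 1) * (v 0 x)) * (eGas 0) + ((christoffel g 0 0 1 x) * (g x 1 1) * (v 0 x)) * (eGas 1) + ((christoffel g 0 0 1 x) * (v 0 x)) * (ePs 1) + ((christoffel g 0 0 1 x) * (v 0 x)) * (eAx 1 0 1) + ((christoffel g 0 0 1 x) * (g x 0 1) *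 (v 0 x)) * (eGas 0) + ((christoffel g 0 0 1 x) * (g x 1 1) * (v 0 x)) * (eGas 1) + ((2) * (christoffel g 1 0 1 x) * (v 0 x)) * (eAx 1 1 1) + ((2) * (christoffel g 0 1 1 x) * (christoffel g 1 0 1 x) * (v 0 x)) * (hGs) + ((pd 1 (christoffel g 0 0 1) x) * (v 0 x)) * (hGs) + ((v 1 x)) * (eA' 1 1 1 1) + ((christoffel g 0 1 1 x) * (v 1 x)) * (eAx 1 0 1) + ((christoffel g 0 1 1 x) * (g x 0 1) * (v 1 x)) * (eGas 0) + ((christoffel g 0 1 1 x) * (g x 1 1) * (v 1 x)) * (eGas 1) + ((christoffel g 0 1 1 x) * (v 1 x)) * (ePs 1) + ((christoffel g 0 1 1 x) * (v 1 x)) * (eAx 1 0 1) + ((christoffel g 0 1 1 x) * (g x 0 1) * (v 1 x)) * (eGas 0) + ((christoffel g 0 1 1 x) * (g x 1 1) * (v 1 x)) * (eGas 1) + ((2) * (christoffel g 1 1 1 x) * (v 1 x)) * (eAx 1 1 1) + ((2) * (christoffel g 0 1 1 x) * (christoffel g 1 1 1 x) * (v 1 x)) * (hGs) + ((pd 1 (christoffel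 g 0 1 1) x) * (v 1 x)) * (hGs) + (((-1)) * (christoffel g 0 0 1 x) * (v 0 x)) * (eAx 1 0 1) + (((-1)) * (christoffel g 0 0 1 x) * (g x 0 1) * (v 0 x)) * (eGas 0) + (((-1)) * (christoffel g 0 0 1 x) * (g x 1 1) * (v 0 x)) * (eGas 1) + (((-1)) * (christoffel g 0 0 1 x) * (v 0 x)) * (ePs 1) + (((-1)) * (christoffel g 0 0 1 x) * (v 0 x)) * (eAx 1 0 1) + (((-1)) * (christoffel g 0 0 1 x) * (g x 0 1) * (v 0 x)) * (eGas 0) + (((-1)) * (christoffel g 0 0 1 x) * (g x 1 1) * (v 0 x)) * (eGas 1) + ((christoffel g 0 1 1 x) * (v 0 x)) * (eAx 0 0 1) + ((christoffel g 0 1 1 x) * (v 0 x)) * (ePs 0) + ((christoffel g 0 1 1 x) * (v 0 x)) * (eAx 0 0 1) + (((-2)) * (christoffel g 1 0 1 x) * (v 0 x)) * (eAx 1 1 1) + (((-2)) * (christoffel g 0 1 1 x) * (christoffel g 1 0 1 x) * (v 0 x)) * (hGs) + ((2) * (christoffel g 1 1 1 x) * (v 0 x)) * (eAx 0 1 1)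 + ((2) * (christoffel g 0 0 1 x) * (christoffel g 1 1 1 x) * (v 0 x)) * (hGs) + ((pd 0 (christoffel g 0 1 1) x) * (v 0 x)) * (hGs) + (((-1)) * (pd 1 (christoffel g 0 0 1) x) * (v 0 x)) * (hGs)

/-! ### Identity C : curvature kills a parallel symmetric 2-tensor -/

lemma IdC {g : (Fin 2 → ℝ) → Matrix (Fin 2) (Fin 2) ℝ}
    (hsm : ∀ i j, ContDiff ℝ (⊤ : ℕ∞) (fun x => g x i j)) (hsym : ∀ x, (g x).IsSymm)
    (T : Fin 2 → Fin 2 → (Fin 2 → ℝ) → ℝ) {W : Set (Fin 2 → ℝ)} (hWo : IsOpen W)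
    {x : Fin 2 → ℝ} (hxW : x ∈ W) (hx : (g x).det ≠ 0)
    (hT2 : ∀ a b, ContDiffAt ℝ 2 (T a b) x)
    (hTs : T 1 0 x = T 0 1 x)
    (hnab : ∀ y ∈ W, ∀ s a b : Fin 2, pd s (T a b) y
      = ∑ l, (christoffel g l s a y * T l b y + christoffel g l s b y * T a l y)) :
    ∀ i j : Fin 2, ∑ m, (curvature (christoffel g) m i 0 1 x * T m j x
      + curvature (christoffel g) m j 0 1 x * T i m x) = 0 := by
  have hTd : ∀ a b, DifferentiableAt ℝ (T a b) x :=
    fun a b => (hT2 a b).differentiableAt (by norm_num)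
  have hGs : g x 1 0 = g x 0 1 := (hsym x).apply 0 1
  have gfs : (fun y => g y (1:Fin 2) (0:Fin 2)) = fun y => g y 0 1 :=
    funext fun y => (hsym y).apply 0 1
  have chrf : ∀ k : Fin 2, christoffel g k 1 0 = christoffel g k 0 1 := by
    intro k; funext y; simp only [christoffel, Fin.sum_univ_two, gfs]; ring
  have eGas : ∀ k : Fin 2, christoffel g k 1 0 x = christoffel g k 0 1 x :=
    fun k => by rw [chrf k]
  have eDGs : ∀ s k : Fin 2, pd s (christoffel g k 1 0) x = pd s (christoffel g k 0 1) x :=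
    fun s k => by rw [chrf k]
  have eT : ∀ s a b : Fin 2, pd s (T a b) x
      = (christoffel g 0 s a x * T 0 b x + christoffel g 0 s b x * T a 0 x)
        + (christoffel g 1 s a x * T 1 b x + christoffel g 1 s b x * T a 1 x) := by
    intro s a b
    have h2 := hnab x hxW s a b
    rwa [Fin.sum_univ_two] at h2
  have eQT : ∀ s k a b : Fin 2, pd s (pd k (T a b)) x = (((christoffel g 0 k a x * pd s (T 0 b) x + T 0 b x * pd s (christoffel g 0 k a) x) + (christoffel g 0 k b x * pd s (T a 0) x + T a 0 x * pd s (christoffel g 0 k b) x)) + ((christoffel g 1 k a x * pd s (T 1 b) x + T 1 b x * pd s (christoffel g 1 k a) x) + (christoffel g 1 k b x * pd s (T a 1) x + T a 1 x * pd s (christoffel g 1 k b) x))) := by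
    intro s k a b
    have hfe : (fun y => pd k (T a b) y) =ᶠ[nhds x]
        (fun y => (christoffel g 0 k a y * T 0 b y + christoffel g 0 k b y * T a 0 y)
          + (christoffel g 1 k a y * T 1 b y + christoffel g 1 k b y * T a 1 y)) := by
      filter_upwards [hWo.mem_nhds hxW] with y hy
      have h2 := hnab y hy k a b
      rwa [Fin.sum_univ_two] at h2
    rw [pd_congr_nhds hfe,
      pd_mul_add4 (christoffel g 0 k a) (T 0 b) (christoffel g 0 k b) (T a 0)
        (christoffel g 1 k a) (T 1 b) (christoffel g 1 k b) (T a 1)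
        (dChr hsm hx 0 k a) (hTd 0 b) (dChr hsm hx 0 k b) (hTd a 0)
        (dChr hsm hx 1 k a) (hTd 1 b) (dChr hsm hx 1 k b) (hTd a 1)]
  have esch : ∀ a b : Fin 2, pd 1 (pd 0 (T a b)) x = pd 0 (pd 1 (T a b)) x :=
    fun a b => pd_comm (hT2 a b)
  have eRc : ∀ a b : Fin 2, curvature (christoffel g) a b 0 1 x
      = pd 0 (christoffel g a 1 b) x - pd 1 (christoffel g a 0 b) x
        + ((christoffel g a 0 0 x * christoffel g 0 1 b x
            - christoffel g a 1 0 x * christoffel g 0 0 b x)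
          + (christoffel g a 0 1 x * christoffel g 1 1 b x
            - christoffel g a 1 1 x * christoffel g 1 0 b x)) := by
    intro a b; simp only [curvature, Fin.sum_univ_two]
  simp only [Fin.forall_fin_two, Fin.sum_univ_two]
  refine ⟨⟨?_, ?_⟩, ⟨?_, ?_⟩⟩
  · linear_combination (norm := ring1) (-1) * (esch 0 0) + ((2) * (T 0 0 x)) * (eRc 0 0) + ((2) * (christoffel g 0 0 1 x) * (T 0 0 x)) * (eGas 1) + ((2) * (T 0 0 x)) * (eDGs 0 0) + ((T 0 1 x)) * (eRc 1 0) + (((-1)) * (christoffel g 0 0 0 x) * (T 0 1 x)) * (eGas 1) + ((christoffel g 1 0 0 x) * (T 0 1 x)) * (eGas 0) + ((christoffel g 1 0 1 x) * (T 0 1 x)) * (eGas 1) + ((T 0 1 x)) * (eDGs 0 1) + ((T 1 0 x)) * (eRc 1 0) + (((-1)) * (christoffel g 0 0 0 x) * (T 1 0 x)) * (eGas 1) + (((-1)) * (christoffel g 0 0 0 x) * (christoffel g 1 0 1 x)) * (hTs) + ((christoffel g 1 0 0 x) * (T 1 0 x)) * (eGas 0) + ((christoffel g 0 0 1 x) *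 (christoffel g 1 0 0 x)) * (hTs) + (((-1)) * (christoffel g 1 0 0 x) * (christoffel g 1 1 1 x)) * (hTs) + ((christoffel g 1 0 1 x) * (T 1 0 x)) * (eGas 1) + ((christoffel g 1 0 1 x) * (christoffel g 1 0 1 x)) * (hTs) + ((T 1 0 x)) * (eDGs 0 1) + ((pd 0 (christoffel g 1 0 1) x)) * (hTs) + (((-1)) * (pd 1 (christoffel g 1 0 0) x)) * (hTs) + (((-1))) * (eQT 0 1 0 0) + (((-2)) * (pd 0 (T 0 0) x)) * (eGas 0) + (((-2)) * (christoffel g 0 0 1 x)) * (eT 0 0 0) + (((-2)) * (christoffel g 0 0 1 x) * (christoffel g 1 0 0 x)) * (hTs) + (((-1)) * (pd 0 (T 0 1) x)) * (eGas 1) + (((-1)) * (christoffel g 1 0 1 x)) * (eT 0 0 1) + (((-1)) * (pd 0 (T 1 0) x)) * (eGas 1) + (((-1)) * (christoffel g 1 0 1 x)) * (eT 0 1 0) + (((-1)) * (christoffel g 0 0 0 x) * (christoffel g 1 0 1 x)) * (hTs) + (((-1)) * (christoffel g 1 0 1 x) * (christoffel g 1 0 1 x)) * (hTs) + (((-2))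 * (T 0 0 x)) * (eDGs 0 0) + (((-1)) * (T 0 1 x)) * (eDGs 0 1) + (((-1)) * (T 1 0 x)) * (eDGs 0 1) + (((-1)) * (pd 0 (christoffel g 1 0 1) x)) * (hTs) + ((1)) * (eQT 1 0 0 0) + ((2) * (christoffel g 0 0 0 x)) * (eT 1 0 0) + ((4) * (christoffel g 0 0 0 x) * (T 0 0 x)) * (eGas 0) + ((2) * (christoffel g 0 0 0 x) * (T 0 1 x)) * (eGas 1) + ((2) * (christoffel g 0 0 0 x) * (T 1 0 x)) * (eGas 1) + ((2) * (christoffel g 0 0 0 x) * (christoffel g 1 0 1 x)) * (hTs) + ((christoffel g 1 0 0 x)) * (eT 1 0 1) + ((christoffel g 1 0 0 x) * (T 0 1 x)) * (eGas 0) + ((christoffel g 1 0 0 x) * (T 1 1 x)) * (eGas 1) + ((christoffel g 1 0 0 x)) * (eT 1 1 0) + ((christoffel g 1 0 0 x) * (T 1 0 x)) * (eGas 0) + ((christoffel g 0 0 1 x) * (christoffel g 1 0 0 x)) * (hTs) + ((christoffel g 1 0 0 x) * (T 1 1 x)) * (eGas 1) + ((christoffel g 1 0 0 x) * (christoffel g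 1 1 1 x)) * (hTs) + ((pd 1 (christoffel g 1 0 0) x)) * (hTs)
  · linear_combination (norm := ring1) (-1) * (esch 0 1) + ((T 0 1 x)) * (eRc 0 0) + ((christoffel g 0 0 1 x) * (T 0 1 x)) * (eGas 1) + ((T 0 1 x)) * (eDGs 0 0) + ((T 0 0 x)) * (eRc 0 1) + (((-1)) * (christoffel g 0 0 1 x) * (T 0 0 x)) * (eGas 0) + ((T 1 1 x)) * (eRc 1 0) + (((-1)) * (christoffel g 0 0 0 x) * (T 1 1 x)) * (eGas 1) + ((christoffel g 1 0 0 x) * (T 1 1 x)) * (eGas 0) + ((christoffel g 1 0 1 x) * (T 1 1 x)) * (eGas 1) + ((T 1 1 x)) * (eDGs 0 1) + ((T 0 1 x)) * (eRc 1 1) + (((-1)) * (christoffel g 0 0 1 x) * (T 0 1 x)) * (eGas 1) + (((-1))) * (eQT 0 1 0 1) + (((-1)) * (pd 0 (T 0 1) x)) * (eGas 0) + (((-1)) * (christoffel g 0 0 1 x)) * (eT 0 0 1) + (((-1)) * (christoffel g 0 1 1 x)) * (eT 0 0 0) + (((-1)) * (christoffel g 0 1 1 x) * (christoffel g 1 0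 0 x)) * (hTs) + (((-1)) * (pd 0 (T 1 1) x)) * (eGas 1) + (((-1)) * (christoffel g 1 0 1 x)) * (eT 0 1 1) + (((-1)) * (christoffel g 0 0 1 x) * (christoffel g 1 0 1 x)) * (hTs) + (((-1)) * (christoffel g 1 1 1 x)) * (eT 0 0 1) + (((-1)) * (T 0 1 x)) * (eDGs 0 0) + (((-1)) * (T 1 1 x)) * (eDGs 0 1) + ((1)) * (eQT 1 0 0 1) + ((christoffel g 0 0 0 x)) * (eT 1 0 1) + ((christoffel g 0 0 0 x) * (T 0 1 x)) * (eGas 0) + ((christoffel g 0 0 0 x) * (T 1 1 x)) * (eGas 1) + ((christoffel g 0 0 1 x)) * (eT 1 0 0) + ((2) * (christoffel g 0 0 1 x) * (T 0 0 x)) * (eGas 0) + ((christoffel g 0 0 1 x) * (T 0 1 x)) * (eGas 1) + ((christoffel g 0 0 1 x) * (T 1 0 x)) * (eGas 1) + ((christoffel g 0 0 1 x) * (christoffel g 1 0 1 x)) * (hTs) + ((christoffel g 1 0 0 x)) * (eT 1 1 1) + ((christoffel g 0 1 1 x) * (christoffel g 1 0 0 x)) * (hTs) + ((christoffel g 1 0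 1 x)) * (eT 1 0 1) + ((christoffel g 1 0 1 x) * (T 0 1 x)) * (eGas 0) + ((christoffel g 1 0 1 x) * (T 1 1 x)) * (eGas 1)
  · linear_combination (norm := ring1) (-1) * (esch 0 1) + ((T 1 0 x)) * (eRc 0 0) + ((christoffel g 0 0 1 x) * (T 1 0 x)) * (eGas 1) + ((christoffel g 0 0 1 x) * (christoffel g 1 0 1 x)) * (hTs) + (((-1)) * (christoffel g 0 1 1 x) * (christoffel g 1 0 0 x)) * (hTs) + ((T 1 0 x)) * (eDGs 0 0) + ((pd 0 (christoffel g 0 0 1) x)) * (hTs) + (((-1)) * (pd 1 (christoffel g 0 0 0) x)) * (hTs) + ((T 0 0 x)) * (eRc 0 1) + (((-1)) * (christoffel g 0 0 1 x) * (T 0 0 x)) * (eGas 0) + ((T 1 1 x)) * (eRc 1 0) + (((-1)) * (christoffel g 0 0 0 x) * (T 1 1 x)) * (eGas 1) + ((christoffel g 1 0 0 x) * (T 1 1 x)) * (eGas 0) + ((christoffel g 1 0 1 x) * (T 1 1 x)) * (eGas 1) + ((T 1 1 x)) * (eDGs 0 1) + ((T 1 0 x)) * (eRc 1 1) + (((-1))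 * (christoffel g 0 0 1 x) * (T 1 0 x)) * (eGas 1) + (((-1)) * (christoffel g 0 0 1 x) * (christoffel g 1 0 1 x)) * (hTs) + ((christoffel g 0 1 1 x) * (christoffel g 1 0 0 x)) * (hTs) + ((pd 0 (christoffel g 1 1 1) x)) * (hTs) + (((-1)) * (pd 1 (christoffel g 1 0 1) x)) * (hTs) + (((-1))) * (eQT 0 1 0 1) + (((-1)) * (pd 0 (T 0 1) x)) * (eGas 0) + (((-1)) * (christoffel g 0 0 1 x)) * (eT 0 0 1) + (((-1)) * (christoffel g 0 1 1 x)) * (eT 0 0 0) + (((-1)) * (christoffel g 0 1 1 x) * (christoffel g 1 0 0 x)) * (hTs) + (((-1)) * (pd 0 (T 1 1) x)) * (eGas 1) + (((-1)) * (christoffel g 1 0 1 x)) * (eT 0 1 1) + (((-1)) * (christoffel g 0 0 1 x) * (christoffel g 1 0 1 x)) * (hTs) + (((-1)) * (christoffel g 1 1 1 x)) * (eT 0 0 1) + (((-1)) * (T 0 1 x)) * (eDGs 0 0) + (((-1)) * (T 1 1 x)) * (eDGs 0 1) + ((1)) * (eQT 1 0 0 1) + ((christoffel g 0 0 0 x))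 * (eT 1 0 1) + ((christoffel g 0 0 0 x) * (T 0 1 x)) * (eGas 0) + ((christoffel g 0 0 0 x) * (T 1 1 x)) * (eGas 1) + ((christoffel g 0 0 1 x)) * (eT 1 0 0) + ((2) * (christoffel g 0 0 1 x) * (T 0 0 x)) * (eGas 0) + ((christoffel g 0 0 1 x) * (T 0 1 x)) * (eGas 1) + ((christoffel g 0 0 1 x) * (T 1 0 x)) * (eGas 1) + ((christoffel g 0 0 1 x) * (christoffel g 1 0 1 x)) * (hTs) + ((christoffel g 1 0 0 x)) * (eT 1 1 1) + ((christoffel g 0 1 1 x) * (christoffel g 1 0 0 x)) * (hTs) + ((christoffel g 1 0 1 x)) * (eT 1 0 1) + ((christoffel g 1 0 1 x) * (T 0 1 x)) * (eGas 0) + ((christoffel g 1 0 1 x) * (T 1 1 x)) * (eGas 1)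
  · linear_combination (norm := ring1) (-1) * (esch 1 1) + ((T 0 1 x)) * (eRc 0 1) + (((-1)) * (christoffel g 0 0 1 x) * (T 0 1 x)) * (eGas 0) + ((T 1 0 x)) * (eRc 0 1) + ((christoffel g 0 0 0 x) * (christoffel g 0 1 1 x)) * (hTs) + (((-1)) * (christoffel g 0 0 1 x) * (T 1 0 x)) * (eGas 0) + (((-1)) * (christoffel g 0 0 1 x) * (christoffel g 0 0 1 x)) * (hTs) + ((christoffel g 0 0 1 x) * (christoffel g 1 1 1 x)) * (hTs) + (((-1)) * (christoffel g 0 1 1 x) * (christoffel g 1 0 1 x)) * (hTs) + ((pd 0 (christoffel g 0 1 1) x)) * (hTs) + (((-1)) * (pd 1 (christoffel g 0 0 1) x)) * (hTs) + ((2) * (T 1 1 x)) * (eRc 1 1) + (((-2)) * (christoffel g 0 0 1 x) * (T 1 1 x)) * (eGas 1) + (((-1))) * (eQT 0 1 1 1) + (((-1)) * (christoffel g 0 1 1 x)) * (eT 0 0 1) + (((-1)) * (christoffel g 0 1 1 x)) * (eT 0 1 0) + (((-1)) * (christoffel g 0 0 0 x) * (christoffel g 0 1 1 x)) * (hTs)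 + (((-1)) * (christoffel g 0 1 1 x) * (christoffel g 1 0 1 x)) * (hTs) + (((-2)) * (christoffel g 1 1 1 x)) * (eT 0 1 1) + (((-2)) * (christoffel g 0 0 1 x) * (christoffel g 1 1 1 x)) * (hTs) + (((-1)) * (pd 0 (christoffel g 0 1 1) x)) * (hTs) + ((1)) * (eQT 1 0 1 1) + ((christoffel g 0 0 1 x)) * (eT 1 0 1) + ((christoffel g 0 0 1 x) * (T 0 1 x)) * (eGas 0) + ((christoffel g 0 0 1 x) * (T 1 1 x)) * (eGas 1) + ((christoffel g 0 0 1 x)) * (eT 1 1 0) + ((christoffel g 0 0 1 x) * (T 1 0 x)) * (eGas 0) + ((christoffel g 0 0 1 x) * (christoffel g 0 0 1 x)) * (hTs) + ((christoffel g 0 0 1 x) * (T 1 1 x)) * (eGas 1) + ((christoffel g 0 0 1 x) * (christoffel g 1 1 1 x)) * (hTs) + ((2) * (christoffel g 1 0 1 x)) * (eT 1 1 1) + ((2) * (christoffel g 0 1 1 x) * (christoffel g 1 0 1 x)) * (hTs) + ((pd 1 (christoffel g 0 0 1) x)) * (hTs)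

/-! ### pointwise linear algebra in dimension 2 -/

lemma endalg (M00 M01 M10 M11 G00 G01 G10 G11 H00 H01 H10 H11 : ℝ)
    (hGs : G10 = G01) (hHs : H10 = H01)
    (hdet : G00 * G11 - G01 * G10 ≠ 0)
    (hM : ¬(M00 = 0 ∧ M01 = 0 ∧ M10 = 0 ∧ M11 = 0))
    (eg00 : (M00*G00 + M00*G00) + (M10*G10 + M10*G01) = 0)
    (eg01 : (M00*G01 + M01*G00) + (M10*G11 + M11*G01) = 0)
    (eg11 : (M01*G01 + M01*G10) + (M11*G11 + M11*G11) = 0)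
    (eh00 : (M00*H00 + M00*H00) + (M10*H10 + M10*H01) = 0)
    (eh01 : (M00*H01 + M01*H00) + (M10*H11 + M11*H01) = 0)
    (eh11 : (M01*H01 + M01*H10) + (M11*H11 + M11*H11) = 0) :
    (M00*G01 + M10*G11) ≠ 0 ∧
      ((M00*G01 + M10*G11) * H00 = (M00*H01 + M10*H11) * G00 ∧
       (M00*G01 + M10*G11) * H01 = (M00*H01 + M10*H11) * G01 ∧
       (M00*G01 + M10*G11) * H10 = (M00*H01 + M10*H11) * G10 ∧
       (M00*G01 + M10*G11) * H11 = (M00*H01 + M10*H11) * G11) := by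
  have sg00 : M00*G00 + M10*G10 = 0 := by linear_combination (1/2)*eg00 + (1/2)*M10*hGs
  have sg11 : M01*G01 + M11*G11 = 0 := by linear_combination (1/2)*eg11 - (1/2)*M01*hGs
  have sg10 : M01*G00 + M11*G10 + (M00*G01 + M10*G11) = 0 := by
    linear_combination eg01 + M11*hGs
  have haGn : (M00*G01 + M10*G11) ≠ 0 := by
    intro haG
    have sg10' : M01*G00 + M11*G10 = 0 := by linear_combination sg10 - haG
    have m00 : M00 = 0 := by
      have h1 : (G00*G11 - G01*G10) * M00 = 0 := by linear_combination G11*sg00 - G10*haG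
      exact (mul_eq_zero.mp h1).resolve_left hdet
    have m10 : M10 = 0 := by
      have h1 : (G00*G11 - G01*G10) * M10 = 0 := by linear_combination G00*haG - G01*sg00
      exact (mul_eq_zero.mp h1).resolve_left hdet
    have m01 : M01 = 0 := by
      have h1 : (G00*G11 - G01*G10) * M01 = 0 := by linear_combination G11*sg10' - G10*sg11
      exact (mul_eq_zero.mp h1).resolve_left hdet
    have m11 : M11 = 0 := by
      have h1 : (G00*G11 - G01*G10) * M11 = 0 := by linear_combination G00*sg11 - G01*sg10'
      exact (mul_eq_zero.mp h1).resolve_left hdet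
    exact hM ⟨m00, m01, m10, m11⟩
  have sh00 : M00*H00 + M10*H10 = 0 := by linear_combination (1/2)*eh00 + (1/2)*M10*hHs
  have sh11 : M01*H01 + M11*H11 = 0 := by linear_combination (1/2)*eh11 - (1/2)*M01*hHs
  have sh10 : M01*H00 + M11*H10 + (M00*H01 + M10*H11) = 0 := by
    linear_combination eh01 + M11*hHs
  have c2 : (M00*G01 + M10*G11)*(M00*G01 + M10*G11)
      = (M00*M11 - M01*M10)*(G00*G11 - G01*G10) := by
    linear_combination (M00*G01 + M10*G11)*sg10 - (M01*G01 + M11*G11)*sg00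
  have haG2 : (M00*G01 + M10*G11)*(M00*G01 + M10*G11) ≠ 0 := mul_ne_zero haGn haGn
  -- the four entries of Mᵀ · (aG • H - aH • G) vanish
  have nn00 : M00*((M00*G01+M10*G11)*H00 - (M00*H01+M10*H11)*G00)
      + M10*((M00*G01+M10*G11)*H10 - (M00*H01+M10*H11)*G10) = 0 := by
    linear_combination (M00*G01+M10*G11)*sh00 - (M00*H01+M10*H11)*sg00
  have nn01 : M00*((M00*G01+M10*G11)*H01 - (M00*H01+M10*H11)*G01)
      + M10*((M00*G01+M10*G11)*H11 - (M00*H01+M10*H11)*G11) = 0 := by ring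
  have nn10 : M01*((M00*G01+M10*G11)*H00 - (M00*H01+M10*H11)*G00)
      + M11*((M00*G01+M10*G11)*H10 - (M00*H01+M10*H11)*G10) = 0 := by
    linear_combination (M00*G01+M10*G11)*sh10 - (M00*H01+M10*H11)*sg10
  have nn11 : M01*((M00*G01+M10*G11)*H01 - (M00*H01+M10*H11)*G01)
      + M11*((M00*G01+M10*G11)*H11 - (M00*H01+M10*H11)*G11) = 0 := by
    linear_combination (M00*G01+M10*G11)*sh11 - (M00*H01+M10*H11)*sg11
  have key : ∀ X Y : ℝ,
      (M00*M11 - M01*M10) * X = 0 →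
      (M00*G01 + M10*G11)*(M00*G01 + M10*G11) * X = 0 := by
    intro X Y h1
    calc (M00*G01 + M10*G11)*(M00*G01 + M10*G11) * X
        = (G00*G11 - G01*G10) * ((M00*M11 - M01*M10) * X) := by linear_combination X * c2
      _ = 0 := by rw [h1, mul_zero]
  refine ⟨haGn, ?_, ?_, ?_, ?_⟩
  · have h1 : (M00*M11 - M01*M10) * ((M00*G01+M10*G11)*H00 - (M00*H01+M10*H11)*G00) = 0 := by
      linear_combination M11*nn00 - M10*nn10
    have h2 := key _ 0 h1
    have h3 := (mul_eq_zero.mp h2).resolve_left haG2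
    linarith [h3]
  · have h1 : (M00*M11 - M01*M10) * ((M00*G01+M10*G11)*H01 - (M00*H01+M10*H11)*G01) = 0 := by
      linear_combination M11*nn01 - M10*nn11
    have h2 := key _ 0 h1
    have h3 := (mul_eq_zero.mp h2).resolve_left haG2
    linarith [h3]
  · have h1 : (M00*M11 - M01*M10) * ((M00*G01+M10*G11)*H10 - (M00*H01+M10*H11)*G10) = 0 := by
      linear_combination M00*nn10 - M01*nn00
    have h2 := key _ 0 h1
    have h3 := (mul_eq_zero.mp h2).resolve_left haG2
    linarith [h3]
  · have h1 : (M00*M11 - M01*M10) * ((M00*G01+M10*G11)*H11 - (M00*H01+M10*H11)*G11) = 0 := by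
      linear_combination M00*nn11 - M01*nn01
    have h2 := key _ 0 h1
    have h3 := (mul_eq_zero.mp h2).resolve_left haG2
    linarith [h3]

/-! ### remaining auxiliary lemmas -/

lemma smooth_lieMetric {g : (Fin 2 → ℝ) → Matrix (Fin 2) (Fin 2) ℝ}
    {v : Fin 2 → (Fin 2 → ℝ) → ℝ}
    (hsm : ∀ i j, ContDiff ℝ (⊤ : ℕ∞) (fun x => g x i j)) (hv : SmoothVF v)
    (m : ℕ) (i j : Fin 2) : ContDiff ℝ (m : ℕ) (lieMetric v g i j) := by
  have e1 : lieMetric v g i j = fun y =>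
      (v 0 y * pd 0 (fun z => g z i j) y + g y 0 j * pd i (v 0) y + g y i 0 * pd j (v 0) y)
      + (v 1 y * pd 1 (fun z => g z i j) y + g y 1 j * pd i (v 1) y + g y i 1 * pd j (v 1) y) := by
    funext y; simp only [lieMetric, Fin.sum_univ_two]
  rw [e1]
  have cv : ∀ l : Fin 2, ContDiff ℝ (m:ℕ) (v l) := fun l => (hv l).of_le (by exact_mod_cast le_top)
  have cpv : ∀ (c l : Fin 2), ContDiff ℝ (m:ℕ) (pd c (v l)) :=
    fun c l => contDiff_pd ((hv l).of_le (by exact_mod_cast le_top))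
  have cgg : ∀ a b : Fin 2, ContDiff ℝ (m:ℕ) (fun y => g y a b) :=
    fun a b => (hsm a b).of_le (by exact_mod_cast le_top)
  have cpg : ∀ (c : Fin 2) (a b : Fin 2), ContDiff ℝ (m:ℕ) (pd c (fun z => g z a b)) :=
    fun c a b => contDiff_pd ((hsm a b).of_le (by exact_mod_cast le_top))
  exact ((((cv 0).mul (cpg 0 i j)).add ((cgg 0 j).mul (cpv i 0))).add
      ((cgg i 0).mul (cpv j 0))).add
    ((((cv 1).mul (cpg 1 i j)).add ((cgg 1 j).mul (cpv i 1))).add ((cgg i 1).mul (cpv j 1)))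

lemma lieMetric_symm {g : (Fin 2 → ℝ) → Matrix (Fin 2) (Fin 2) ℝ}
    {v : Fin 2 → (Fin 2 → ℝ) → ℝ} (hsym : ∀ x, (g x).IsSymm) (y : Fin 2 → ℝ) :
    lieMetric v g 1 0 y = lieMetric v g 0 1 y := by
  have gfs : (fun z => g z (1:Fin 2) (0:Fin 2)) = fun z => g z 0 1 :=
    funext fun z => (hsym z).apply 0 1
  have hGsy : g y 1 0 = g y 0 1 := (hsym y).apply 0 1
  simp only [lieMetric, Fin.sum_univ_two, gfs, hGsy]
  ring

lemma curv_kk {Γ : Fin 2 → Fin 2 → Fin 2 → (Fin 2 → ℝ) → ℝ} (i j k : Fin 2) (y : Fin 2 → ℝ) :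
    curvature Γ i j k k y = 0 := by
  simp only [curvature, Fin.sum_univ_two]; ring

lemma curv_swap {Γ : Fin 2 → Fin 2 → Fin 2 → (Fin 2 → ℝ) → ℝ} (i j : Fin 2) (y : Fin 2 → ℝ) :
    curvature Γ i j 1 0 y = -curvature Γ i j 0 1 y := by
  simp only [curvature, Fin.sum_univ_two]; ring

lemma cCurv {g : (Fin 2 → ℝ) → Matrix (Fin 2) (Fin 2) ℝ}
    (hsm : ∀ i j, ContDiff ℝ (⊤ : ℕ∞) (fun x => g x i j)) (m : ℕ) {x : Fin 2 → ℝ}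
    (hx : (g x).det ≠ 0) (a b : Fin 2) :
    ContDiffAt ℝ (m : ℕ) (fun y => curvature (christoffel g) a b 0 1 y) x := by
  have e1 : (fun y => curvature (christoffel g) a b 0 1 y) = fun y =>
      pd 0 (christoffel g a 1 b) y - pd 1 (christoffel g a 0 b) y
      + ((christoffel g a 0 0 y * christoffel g 0 1 b y
          - christoffel g a 1 0 y * christoffel g 0 0 b y)
        + (christoffel g a 0 1 y * christoffel g 1 1 b y
          - christoffel g a 1 1 y * christoffel g 1 0 b y)) := by
    funext y; simp only [curvature, Fin.sum_univ_two]
  rw [e1]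
  have cpd : ∀ (s : Fin 2) (k i j : Fin 2), ContDiffAt ℝ (m:ℕ) (pd s (christoffel g k i j)) x :=
    fun s k i j => contDiffAt_pd (m := m) (contDiffAt_chr hsm (m+1) hx k i j)
  have cch : ∀ k i j : Fin 2, ContDiffAt ℝ (m:ℕ) (christoffel g k i j) x :=
    fun k i j => contDiffAt_chr hsm m hx k i j
  exact ((cpd 0 a 1 b).sub (cpd 1 a 0 b)).add
    ((((cch a 0 0).mul (cch 0 1 b)).sub ((cch a 1 0).mul (cch 0 0 b))).add
      (((cch a 0 1).mul (cch 1 1 b)).sub ((cch a 1 1).mul (cch 1 0 b))))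


/-- on a 2-dimensional pseudo-Riemannian manifold (modelled by a
connected open chart `U ⊆ ℝ²`) whose curvature is nonzero at every point, every
affine vector field is a homothety: `𝔞(g) = H(g)`. -/
theorem dim2_affine_is_homothety
    (g : (Fin 2 → ℝ) → Matrix (Fin 2) (Fin 2) ℝ)
    (U : Set (Fin 2 → ℝ)) (hUo : IsOpen U) (hUc : IsConnected U)
    (hsm : ∀ i j, ContDiff ℝ (⊤ : ℕ∞) (fun x => g x i j))
    (hsym : ∀ x, (g x).IsSymm)
    (hnd : ∀ x ∈ U, (g x).det ≠ 0)
    (hcurv : ∀ x ∈ U, ∃ i j k l : Fin 2, curvature (christoffel g) i j k l x ≠ 0) :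
    ∀ v : Fin 2 → (Fin 2 → ℝ) → ℝ, SmoothVF v →
      (∀ k i j : Fin 2, ∀ x ∈ U, lieConn v (christoffel g) k i j x = 0) →
      ∃ c : ℝ, ∀ i j : Fin 2, ∀ x ∈ U, lieMetric v g i j x = c * g x i j := by
  intro v hv hflat
  -- ∇ (L_v g) = 0 on U
  have nabH : ∀ y ∈ U, ∀ s a b : Fin 2, pd s (lieMetric v g a b) y
      = ∑ l, (christoffel g l s a y * lieMetric v g l b y
          + christoffel g l s b y * lieMetric v g a l y) := by
    intro y hy s a b
    have hB := IdB hsm hsym hv (hnd y hy) s a b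
    rw [Fin.sum_univ_two] at hB
    rw [Fin.sum_univ_two, hB]
    linear_combination (g y 0 b) * hflat 0 s a y hy + (g y a 0) * hflat 0 s b y hy
      + (g y 1 b) * hflat 1 s a y hy + (g y a 1) * hflat 1 s b y hy
  -- curvature kills g and L_v g
  have hCg : ∀ y ∈ U, ∀ i j : Fin 2,
      ∑ m, (curvature (christoffel g) m i 0 1 y * g y m j
        + curvature (christoffel g) m j 0 1 y * g y i m) = 0 := by
    intro y hy
    exact IdC hsm hsym (fun a b z => g z a b) (openV hsm) (hnd y hy) (hnd y hy)
      (fun a b => ((hsm a b).contDiffAt).of_le (WithTop.coe_le_coe.mpr le_top)) ((hsym y).apply 0 1)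
      (fun z hz s a b => IdA hsym hz s a b)
  have hCh : ∀ y ∈ U, ∀ i j : Fin 2,
      ∑ m, (curvature (christoffel g) m i 0 1 y * lieMetric v g m j y
        + curvature (christoffel g) m j 0 1 y * lieMetric v g i m y) = 0 := by
    intro y hy
    exact IdC hsm hsym (fun a b => lieMetric v g a b) hUo hy (hnd y hy)
      (fun a b => ((smooth_lieMetric hsm hv 2 a b).contDiffAt).of_le (by exact_mod_cast le_rfl))
      (lieMetric_symm hsym y) (fun z hz s a b => nabH z hz s a b)
  -- the curvature endomorphism is nonzero on U
  have curvzero : ∀ y ∈ U,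
      ¬(curvature (christoffel g) 0 0 0 1 y = 0 ∧ curvature (christoffel g) 0 1 0 1 y = 0 ∧
        curvature (christoffel g) 1 0 0 1 y = 0 ∧ curvature (christoffel g) 1 1 0 1 y = 0) := by
    intro y hy hall
    obtain ⟨h1, h2, h3, h4⟩ := hall
    obtain ⟨i, j, k, l, hne⟩ := hcurv y hy
    apply hne
    have hz01 : ∀ a b : Fin 2, curvature (christoffel g) a b 0 1 y = 0 := by
      simp only [Fin.forall_fin_two]
      exact ⟨⟨h1, h2⟩, ⟨h3, h4⟩⟩
    fin_cases k <;> fin_cases l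
    · exact curv_kk i j 0 y
    · exact hz01 i j
    · have hzz : -curvature (christoffel g) i j 0 1 y = 0 := by rw [hz01 i j, neg_zero]
      exact (curv_swap i j y).trans hzz
    · exact curv_kk i j 1 y
  -- endgame algebra at every point of U
  have hEnd : ∀ y ∈ U,
      (curvature (christoffel g) 0 0 0 1 y * g y 0 1
        + curvature (christoffel g) 1 0 0 1 y * g y 1 1) ≠ 0 ∧
      (∀ a b : Fin 2, lieMetric v g a b y *
          (curvature (christoffel g) 0 0 0 1 y * g y 0 1
            + curvature (christoffel g) 1 0 0 1 y * g y 1 1)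
        = (curvature (christoffel g) 0 0 0 1 y * lieMetric v g 0 1 y
            + curvature (christoffel g) 1 0 0 1 y * lieMetric v g 1 1 y) * g y a b) := by
    intro y hy
    have hdet2 : g y 0 0 * g y 1 1 - g y 0 1 * g y 1 0 ≠ 0 := by
      have h2 := hnd y hy; rwa [Matrix.det_fin_two] at h2
    have eg : ∀ i j : Fin 2,
        (curvature (christoffel g) 0 i 0 1 y * g y 0 j
          + curvature (christoffel g) 0 j 0 1 y * g y i 0)
        + (curvature (christoffel g) 1 i 0 1 y * g y 1 j
          + curvature (christoffel g) 1 j 0 1 y * g y i 1) = 0 := by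
      intro i j
      have h2 := hCg y hy i j
      rwa [Fin.sum_univ_two] at h2
    have eh : ∀ i j : Fin 2,
        (curvature (christoffel g) 0 i 0 1 y * lieMetric v g 0 j y
          + curvature (christoffel g) 0 j 0 1 y * lieMetric v g i 0 y)
        + (curvature (christoffel g) 1 i 0 1 y * lieMetric v g 1 j y
          + curvature (christoffel g) 1 j 0 1 y * lieMetric v g i 1 y) = 0 := by
      intro i j
      have h2 := hCh y hy i j
      rwa [Fin.sum_univ_two] at h2
    obtain ⟨ha, h1, h2, h3, h4⟩ := endalg
      (curvature (christoffel g) 0 0 0 1 y) (curvature (christoffel g) 0 1 0 1 y)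
      (curvature (christoffel g) 1 0 0 1 y) (curvature (christoffel g) 1 1 0 1 y)
      (g y 0 0) (g y 0 1) (g y 1 0) (g y 1 1)
      (lieMetric v g 0 0 y) (lieMetric v g 0 1 y) (lieMetric v g 1 0 y) (lieMetric v g 1 1 y)
      ((hsym y).apply 0 1) (lieMetric_symm hsym y) hdet2 (curvzero y hy)
      (eg 0 0) (eg 0 1) (eg 1 1) (eh 0 0) (eh 0 1) (eh 1 1)
    refine ⟨ha, ?_⟩
    simp only [Fin.forall_fin_two]
    exact ⟨⟨by linear_combination h1, by linear_combination h2⟩,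
      ⟨by linear_combination h3, by linear_combination h4⟩⟩
  -- the conformal factor
  set F : (Fin 2 → ℝ) → ℝ := fun y =>
    (curvature (christoffel g) 0 0 0 1 y * lieMetric v g 0 1 y
      + curvature (christoffel g) 1 0 0 1 y * lieMetric v g 1 1 y)
    / (curvature (christoffel g) 0 0 0 1 y * g y 0 1
      + curvature (christoffel g) 1 0 0 1 y * g y 1 1) with hF
  have hfg : ∀ y ∈ U, ∀ i j : Fin 2, lieMetric v g i j y = F y * g y i j := by
    intro y hy i j
    obtain ⟨ha, hall⟩ := hEnd y hy
    simp only [hF]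
    rw [div_mul_eq_mul_div, eq_div_iff ha]
    linear_combination hall i j
  -- F is differentiable on U
  have dF : ∀ y ∈ U, DifferentiableAt ℝ F y := by
    intro y hy
    have dH : ∀ a b : Fin 2, ContDiffAt ℝ (1:ℕ) (lieMetric v g a b) y :=
      fun a b => (smooth_lieMetric hsm hv 1 a b).contDiffAt
    have h1 : ContDiffAt ℝ (1:ℕ) (fun z =>
        curvature (christoffel g) 0 0 0 1 z * lieMetric v g 0 1 z
          + curvature (christoffel g) 1 0 0 1 z * lieMetric v g 1 1 z) y :=
      ((cCurv hsm 1 (hnd y hy) 0 0).mul (dH 0 1)).add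
        ((cCurv hsm 1 (hnd y hy) 1 0).mul (dH 1 1))
    have h2 : ContDiffAt ℝ (1:ℕ) (fun z =>
        curvature (christoffel g) 0 0 0 1 z * g z 0 1
          + curvature (christoffel g) 1 0 0 1 z * g z 1 1) y :=
      ((cCurv hsm 1 (hnd y hy) 0 0).mul ((hsm 0 1).contDiffAt.of_le (by simp))).add
        ((cCurv hsm 1 (hnd y hy) 1 0).mul ((hsm 1 1).contDiffAt.of_le (by simp)))
    have h3 : ContDiffAt ℝ (1:ℕ) (fun z =>
        (curvature (christoffel g) 0 0 0 1 z * lieMetric v g 0 1 z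
          + curvature (christoffel g) 1 0 0 1 z * lieMetric v g 1 1 z)
        / (curvature (christoffel g) 0 0 0 1 z * g z 0 1
          + curvature (christoffel g) 1 0 0 1 z * g z 1 1)) y :=
      h1.div h2 (hEnd y hy).1
    rw [hF]
    exact h3.differentiableAt (by norm_num)
  -- the derivative of F vanishes on U
  have hpdF : ∀ y ∈ U, ∀ k : Fin 2, pd k F y = 0 := by
    intro y hy k
    have hFg : ∀ i j : Fin 2, g y i j * pd k F y = 0 := by
      intro i j
      have hEq : lieMetric v g i j =ᶠ[nhds y] (fun z => F z * g z i j) := by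
        filter_upwards [hUo.mem_nhds hy] with z hz
        exact hfg z hz i j
      have e1 : pd k (lieMetric v g i j) y
          = F y * pd k (fun z => g z i j) y + g y i j * pd k F y := by
        rw [pd_congr_nhds hEq, pd_mul (dF y hy) (dG hsm y i j)]
      have e2 : pd k (lieMetric v g i j) y = F y * pd k (fun z => g z i j) y := by
        have hB := nabH y hy k i j
        rw [Fin.sum_univ_two] at hB
        have hA := IdA hsym (hnd y hy) k i j
        rw [Fin.sum_univ_two] at hA
        rw [hB, hfg y hy 0 j, hfg y hy i 0, hfg y hy 1 j, hfg y hy i 1]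
        linear_combination (-(F y)) * hA
      linear_combination e2 - e1
    by_contra h0
    have hz : ∀ i j : Fin 2, g y i j = 0 := by
      intro i j
      rcases mul_eq_zero.mp (hFg i j) with h | h
      · exact h
      · exact absurd h h0
    have hd := hnd y hy
    rw [Matrix.det_fin_two, hz 0 0, hz 1 1, hz 0 1, hz 1 0] at hd
    norm_num at hd
  have hfd : ∀ y ∈ U, fderiv ℝ F y = 0 := by
    intro y hy
    refine ContinuousLinearMap.ext fun w => ?_
    have hw : w = w 0 • (Pi.single 0 1 : Fin 2 → ℝ) + w 1 • (Pi.single 1 1 : Fin 2 → ℝ) := by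
      funext a; fin_cases a <;> simp [Pi.single_apply]
    have p0 : fderiv ℝ F y (Pi.single 0 1) = 0 := hpdF y hy 0
    have p1 : fderiv ℝ F y (Pi.single 1 1) = 0 := hpdF y hy 1
    rw [hw, (fderiv ℝ F y).map_add, (fderiv ℝ F y).map_smul, (fderiv ℝ F y).map_smul, p0, p1]
    simp
  -- F is locally constant on U
  have hloc : ∀ z ∈ U, ∀ᶠ w in nhds z, F w = F z := by
    intro z hz
    obtain ⟨ε, hε, hball⟩ := Metric.isOpen_iff.mp hUo z hz
    filter_upwards [Metric.ball_mem_nhds z hε] with w hw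
    have hdiff : DifferentiableOn ℝ F (Metric.ball z ε) :=
      fun u hu => (dF u (hball hu)).differentiableWithinAt
    have hzero : ∀ u ∈ Metric.ball z ε, fderivWithin ℝ F (Metric.ball z ε) u = 0 := by
      intro u hu
      rw [fderivWithin_of_isOpen Metric.isOpen_ball hu]
      exact hfd u (hball hu)
    exact (convex_ball z ε).is_const_of_fderivWithin_eq_zero hdiff hzero hw
      (Metric.mem_ball_self hε)
  -- hence F is constant on the connected set U
  obtain ⟨x₀, hx₀⟩ := hUc.nonempty
  have hUsub : U ⊆ {z | z ∈ U ∧ F z = F x₀} := by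
    have hA : IsOpen {z | z ∈ U ∧ F z = F x₀} := by
      rw [isOpen_iff_mem_nhds]
      rintro z ⟨hzU, hzF⟩
      filter_upwards [hloc z hzU, hUo.mem_nhds hzU] with w h1 h2
      exact ⟨h2, h1.trans hzF⟩
    have hB : IsOpen {z | z ∈ U ∧ F z ≠ F x₀} := by
      rw [isOpen_iff_mem_nhds]
      rintro z ⟨hzU, hzF⟩
      filter_upwards [hloc z hzU, hUo.mem_nhds hzU] with w h1 h2
      exact ⟨h2, fun hc => hzF (h1.symm.trans hc)⟩
    have hdisj : Disjoint {z | z ∈ U ∧ F z = F x₀} {z | z ∈ U ∧ F z ≠ F x₀} := by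
      rw [Set.disjoint_left]
      rintro a ⟨_, h⟩ ⟨_, h'⟩
      exact h' h
    have hsub : U ⊆ {z | z ∈ U ∧ F z = F x₀} ∪ {z | z ∈ U ∧ F z ≠ F x₀} := by
      intro z hz
      by_cases h : F z = F x₀
      · exact Or.inl ⟨hz, h⟩
      · exact Or.inr ⟨hz, h⟩
    exact hUc.isPreconnected.subset_left_of_subset_union hA hB hdisj hsub
      ⟨x₀, hx₀, ⟨hx₀, rfl⟩⟩
  refine ⟨F x₀, ?_⟩
  intro i j y hy
  rw [hfg y hy i j, (hUsub hy).2]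
end
end
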